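/- arXiv:2205.11873 — 9 statements merged into one kernel-verified Lean document; each statement's English description precedes it below -/
import Mathlib

section
/- Let (Q0, Q1, Q2, Q3, A1, A2) be a solution of system (S) on [0, T) with initial data satisfying Q_i(0) ≥ 0 for i = 0,1,2,3, A1(0) ∈ [-τ_{A1}, τ_{A1}] and A2(0) ∈ [0, τ_{A2}]. Then for all t ∈ [0, T) and all i = 0,1,2,3 one has Q_i(t) ≥ 0. -/
/-!
Each equation of the `Q`-block has the form `u' = a(t) u + b(t)` with `a` continuous and forcing
`b ≥ 0` as soon as the previous components are nonnegative (`b = 0`, `f₀ Q₀`, `f₁ Q₁`, `f₂ Q₂`).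
For such an equation `u · exp (-∫ a)` is nondecreasing, so `u(0) ≥ 0` propagates, and the four
components become nonnegative one after the other.
-/

open Set

theorem nonneg_of_hasDerivAt_eq_mul_add {a b u : ℝ → ℝ} {t₀ T : ℝ}
    (ha : ContinuousOn a (Ico t₀ T))
    (hu : ∀ t ∈ Ico t₀ T, HasDerivAt u (a t * u t + b t) t)
    (hb : ∀ t ∈ Ico t₀ T, 0 ≤ b t) (hu₀ : 0 ≤ u t₀) :
    ∀ t ∈ Ico t₀ T, 0 ≤ u t := by
  intro t₁ ht₁
  have hsub : Icc t₀ t₁ ⊆ Ico t₀ T := Icc_subset_Ico_right ht₁.2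
  set B : ℝ → ℝ := fun s => ∫ x in t₀..s, a x
  have hB_cont : ContinuousOn B (Icc t₀ t₁) := by
    have := intervalIntegral.continuousOn_primitive_interval (a := t₀) (b := t₁)
      (μ := MeasureTheory.volume) (by rw [uIcc_of_le ht₁.1]; exact (ha.mono hsub).integrableOn_Icc)
    rwa [uIcc_of_le ht₁.1] at this
  have hB_deriv : ∀ s ∈ Ioo t₀ t₁, HasDerivAt B (a s) s := by
    intro s hs
    have hIoo : Ioo t₀ T ∈ nhds s := Ioo_mem_nhds hs.1 (hs.2.trans ht₁.2)
    refine intervalIntegral.integral_hasDerivAt_right ?_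
      ((ha.mono Ioo_subset_Ico_self).stronglyMeasurableAtFilter isOpen_Ioo s
        (mem_of_mem_nhds hIoo))
      ((ha.mono Ioo_subset_Ico_self).continuousAt hIoo)
    exact (ha.mono ((Icc_subset_Icc_right hs.2.le).trans hsub)).intervalIntegrable_of_Icc hs.1.le
  set g : ℝ → ℝ := fun s => u s * Real.exp (-B s)
  have hg_mono : MonotoneOn g (Icc t₀ t₁) := by
    refine monotoneOn_of_hasDerivWithinAt_nonneg (f' := fun s => b s * Real.exp (-B s))
      (convex_Icc t₀ t₁) ?_ ?_ ?_
    · exact (HasDerivAt.continuousOn fun s hs => hu s (hsub hs)).mul hB_cont.neg.rexp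
    · rw [interior_Icc]
      intro s hs
      refine (((hu s (hsub (Ioo_subset_Icc_self hs))).mul
        (hB_deriv s hs).neg.exp).congr_deriv ?_).hasDerivWithinAt
      simp only [Pi.neg_apply]
      ring
    · rw [interior_Icc]
      exact fun s hs => mul_nonneg (hb s (hsub (Ioo_subset_Icc_self hs))) (Real.exp_pos _).le
  have hg : g t₀ ≤ g t₁ := hg_mono (left_mem_Icc.mpr ht₁.1) (right_mem_Icc.mpr ht₁.1) ht₁.1
  have hg₀ : g t₀ = u t₀ := by simp [g, B]
  exact nonneg_of_mul_nonneg_left ((hu₀.trans_eq hg₀.symm).trans hg) (Real.exp_pos _)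

theorem stmt0_general
    (T : ℝ)
    (γ2 γ3 τC τA1 τA1C τA2 τA2C α1 α2 α3 αb2 αb3 : ℝ)
    (f0 : ℝ → ℝ → ℝ) (f1 : ℝ → ℝ) (f2 : ℝ → ℝ → ℝ)
    (K0 K1 K2 : NNReal)
    (hf0lip : LipschitzWith K0 (fun p : ℝ × ℝ => f0 p.1 p.2))
    (hf1lip : LipschitzWith K1 f1)
    (hf2lip : LipschitzWith K2 (fun p : ℝ × ℝ => f2 p.1 p.2))
    (m0 M0 m1 M1 m2 M2 : ℝ) (hm0 : 0 < m0) (hm1 : 0 < m1) (hm2 : 0 < m2)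
    (hf0bd : ∀ x y, m0 ≤ f0 x y ∧ f0 x y ≤ M0)
    (hf1bd : ∀ x, m1 ≤ f1 x ∧ f1 x ≤ M1)
    (hf2bd : ∀ x y, m2 ≤ f2 x y ∧ f2 x y ≤ M2)
    (Q0 Q1 Q2 Q3 A1 A2 : ℝ → ℝ)
    (hQ0' : ∀ t ∈ Set.Ico 0 T, HasDerivAt Q0 (-(f0 (Q2 t) (Q3 t)) * Q0 t) t)
    (hQ1' : ∀ t ∈ Set.Ico 0 T, HasDerivAt Q1 (f0 (Q2 t) (Q3 t) * Q0 t - f1 (A1 t) * Q1 t) t)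
    (hQ2' : ∀ t ∈ Set.Ico 0 T, HasDerivAt Q2
      (γ2 * Q2 t * (1 - (Q2 t + Q3 t) / τC + A1 t / τA1C + A2 t / τA2C)
        + f1 (A1 t) * Q1 t - f2 (A1 t) (A2 t) * Q2 t) t)
    (hQ3' : ∀ t ∈ Set.Ico 0 T, HasDerivAt Q3
      (γ3 * Q3 t * (1 - (Q2 t + Q3 t) / τC + A1 t / τA1C + A2 t / τA2C)
        + f2 (A1 t) (A2 t) * Q2 t) t)
    (hA1' : ∀ t ∈ Set.Ico 0 T, HasDerivAt A1
      ((α1 * Q1 t + α2 * Q2 t - α3 * Q3 t) * (1 + A1 t / τA1) * (1 - A1 t / τA1)) t)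
    (hA2' : ∀ t ∈ Set.Ico 0 T, HasDerivAt A2
      ((αb2 * Q2 t + αb3 * Q3 t) * A2 t * (1 - A2 t / τA2)) t)
    (hQ0i : 0 ≤ Q0 0) (hQ1i : 0 ≤ Q1 0) (hQ2i : 0 ≤ Q2 0) (hQ3i : 0 ≤ Q3 0) :
    ∀ t ∈ Set.Ico 0 T, 0 ≤ Q0 t ∧ 0 ≤ Q1 t ∧ 0 ≤ Q2 t ∧ 0 ≤ Q3 t := by
  have hQ2c : ContinuousOn Q2 (Ico 0 T) := HasDerivAt.continuousOn hQ2'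
  have hQ3c : ContinuousOn Q3 (Ico 0 T) := HasDerivAt.continuousOn hQ3'
  have hA1c : ContinuousOn A1 (Ico 0 T) := HasDerivAt.continuousOn hA1'
  have hA2c : ContinuousOn A2 (Ico 0 T) := HasDerivAt.continuousOn hA2'
  have hf0c : ContinuousOn (fun t => f0 (Q2 t) (Q3 t)) (Ico 0 T) :=
    hf0lip.continuous.comp_continuousOn (hQ2c.prodMk hQ3c)
  have hf1c : ContinuousOn (fun t => f1 (A1 t)) (Ico 0 T) := hf1lip.continuous.comp_continuousOn hA1c
  have hf2c : ContinuousOn (fun t => f2 (A1 t) (A2 t)) (Ico 0 T) :=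
    hf2lip.continuous.comp_continuousOn (hA1c.prodMk hA2c)
  have hLc : ContinuousOn (fun t => 1 - (Q2 t + Q3 t) / τC + A1 t / τA1C + A2 t / τA2C)
      (Ico 0 T) := by fun_prop
  have hQ0 : ∀ t ∈ Ico 0 T, 0 ≤ Q0 t :=
    nonneg_of_hasDerivAt_eq_mul_add (a := fun t => -f0 (Q2 t) (Q3 t)) (b := 0) hf0c.neg
      (fun t ht => (hQ0' t ht).congr_deriv (by simp)) (fun _ _ => le_rfl) hQ0i
  have hQ1 : ∀ t ∈ Ico 0 T, 0 ≤ Q1 t :=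
    nonneg_of_hasDerivAt_eq_mul_add (a := fun t => -f1 (A1 t)) hf1c.neg
      (fun t ht => (hQ1' t ht).congr_deriv (by ring))
      (fun t ht => mul_nonneg (hm0.le.trans (hf0bd _ _).1) (hQ0 t ht)) hQ1i
  have hQ2 : ∀ t ∈ Ico 0 T, 0 ≤ Q2 t :=
    nonneg_of_hasDerivAt_eq_mul_add
      (a := fun t => γ2 * (1 - (Q2 t + Q3 t) / τC + A1 t / τA1C + A2 t / τA2C) - f2 (A1 t) (A2 t))
      ((continuousOn_const.mul hLc).sub hf2c) (fun t ht => (hQ2' t ht).congr_deriv (by ring))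
      (fun t ht => mul_nonneg (hm1.le.trans (hf1bd _).1) (hQ1 t ht)) hQ2i
  have hQ3 : ∀ t ∈ Ico 0 T, 0 ≤ Q3 t :=
    nonneg_of_hasDerivAt_eq_mul_add
      (a := fun t => γ3 * (1 - (Q2 t + Q3 t) / τC + A1 t / τA1C + A2 t / τA2C))
      (continuousOn_const.mul hLc) (fun t ht => (hQ3' t ht).congr_deriv (by ring))
      (fun t ht => mul_nonneg (hm2.le.trans (hf2bd _ _).1) (hQ2 t ht)) hQ3i
  exact fun t ht => ⟨hQ0 t ht, hQ1 t ht, hQ2 t ht, hQ3 t ht⟩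

theorem stmt0
    (T : ℝ) (hT : 0 < T)
    (γ2 γ3 τC τA1 τA1C τA2 τA2C α1 α2 α3 αb2 αb3 : ℝ)
    (hγ2 : 0 < γ2) (hγ3 : 0 < γ3) (hτC : 0 < τC) (hτA1 : 0 < τA1)
    (hτA1C : 0 < τA1C) (hτA2 : 0 < τA2) (hτA2C : 0 < τA2C)
    (hα1 : 0 < α1) (hα2 : 0 < α2) (hα3 : 0 < α3) (hαb2 : 0 < αb2) (hαb3 : 0 < αb3)
    (f0 : ℝ → ℝ → ℝ) (f1 : ℝ → ℝ) (f2 : ℝ → ℝ → ℝ)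
    (K0 K1 K2 : NNReal)
    (hf0lip : LipschitzWith K0 (fun p : ℝ × ℝ => f0 p.1 p.2))
    (hf1lip : LipschitzWith K1 f1)
    (hf2lip : LipschitzWith K2 (fun p : ℝ × ℝ => f2 p.1 p.2))
    (m0 M0 m1 M1 m2 M2 : ℝ) (hm0 : 0 < m0) (hm1 : 0 < m1) (hm2 : 0 < m2)
    (hf0bd : ∀ x y, m0 ≤ f0 x y ∧ f0 x y ≤ M0)
    (hf1bd : ∀ x, m1 ≤ f1 x ∧ f1 x ≤ M1)
    (hf2bd : ∀ x y, m2 ≤ f2 x y ∧ f2 x y ≤ M2)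
    (Q0 Q1 Q2 Q3 A1 A2 : ℝ → ℝ)
    (hQ0' : ∀ t ∈ Set.Ico 0 T, HasDerivAt Q0 (-(f0 (Q2 t) (Q3 t)) * Q0 t) t)
    (hQ1' : ∀ t ∈ Set.Ico 0 T, HasDerivAt Q1 (f0 (Q2 t) (Q3 t) * Q0 t - f1 (A1 t) * Q1 t) t)
    (hQ2' : ∀ t ∈ Set.Ico 0 T, HasDerivAt Q2
      (γ2 * Q2 t * (1 - (Q2 t + Q3 t) / τC + A1 t / τA1C + A2 t / τA2C)
        + f1 (A1 t) * Q1 t - f2 (A1 t) (A2 t) * Q2 t) t)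
    (hQ3' : ∀ t ∈ Set.Ico 0 T, HasDerivAt Q3
      (γ3 * Q3 t * (1 - (Q2 t + Q3 t) / τC + A1 t / τA1C + A2 t / τA2C)
        + f2 (A1 t) (A2 t) * Q2 t) t)
    (hA1' : ∀ t ∈ Set.Ico 0 T, HasDerivAt A1
      ((α1 * Q1 t + α2 * Q2 t - α3 * Q3 t) * (1 + A1 t / τA1) * (1 - A1 t / τA1)) t)
    (hA2' : ∀ t ∈ Set.Ico 0 T, HasDerivAt A2
      ((αb2 * Q2 t + αb3 * Q3 t) * A2 t * (1 - A2 t / τA2)) t)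
    (hQ0i : 0 ≤ Q0 0) (hQ1i : 0 ≤ Q1 0) (hQ2i : 0 ≤ Q2 0) (hQ3i : 0 ≤ Q3 0)
    (hA1i : A1 0 ∈ Set.Icc (-τA1) τA1) (hA2i : A2 0 ∈ Set.Icc 0 τA2) :
    ∀ t ∈ Set.Ico 0 T, 0 ≤ Q0 t ∧ 0 ≤ Q1 t ∧ 0 ≤ Q2 t ∧ 0 ≤ Q3 t :=
  stmt0_general T γ2 γ3 τC τA1 τA1C τA2 τA2C α1 α2 α3 αb2 αb3 f0 f1 f2 K0 K1 K2 hf0lip hf1lip hf2lip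
    m0 M0 m1 M1 m2 M2 hm0 hm1 hm2 hf0bd hf1bd hf2bd Q0 Q1 Q2 Q3 A1 A2 hQ0' hQ1' hQ2' hQ3' hA1' hA2'
    hQ0i hQ1i hQ2i hQ3i
end

section
/- Let (Q0, Q1, Q2, Q3, A1, A2) be a solution of system (S) on [0, T) with initial data satisfying Q_i(0) ≥ 0 for i = 0,1,2,3, A1(0) ∈ [-τ_{A1}, τ_{A1}] and A2(0) ∈ [0, τ_{A2}]. Then for all t ∈ [0, T), one has -τ_{A1} ≤ A1(t) ≤ τ_{A1} and 0 ≤ A2(t) ≤ τ_{A2}. -/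
/-!
Each bound is a level `b` at which the right-hand side of the equation for `A₁` or `A₂`
vanishes, so that equation can be written as `x' = G(t) (x - b)` with `G` continuous.
If `x` crossed `b`, it would equal `b` at some earlier time `t₀`; on `[t₀, t₁]` the coefficient
`G` is bounded, and Grönwall's inequality forces `x - b` to stay `0`, a contradiction.
-/

open Set

theorem apply_le_of_hasDerivAt_mul_sub {F G : ℝ → ℝ} {a T b : ℝ}
    (hF : ∀ t ∈ Ico a T, HasDerivAt F (G t * (F t - b)) t)
    (hG : ∀ t ∈ Ico a T, ContinuousAt G t) (ha : F a ≤ b) :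
    ∀ t ∈ Ico a T, F t ≤ b := by
  intro t₁ ht₁
  by_contra! hlt
  have hsub : Icc a t₁ ⊆ Ico a T := Icc_subset_Ico_right ht₁.2
  obtain ⟨t₀, ht₀, hFt₀⟩ := intermediate_value_Icc ht₁.1
    (fun t ht => (hF t (hsub ht)).continuousAt.continuousWithinAt) ⟨ha, hlt.le⟩
  have hsub₀ : Icc t₀ t₁ ⊆ Ico a T := (Icc_subset_Icc_left ht₀.1).trans hsub
  obtain ⟨C, hC⟩ := isCompact_Icc.exists_bound_of_continuousOn
    (fun t ht => (hG t (hsub₀ ht)).continuousWithinAt)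
  have hzero : F t₁ - b = 0 :=
    eq_zero_of_abs_deriv_le_mul_abs_self_of_eq_zero_right (f := fun t => F t - b) (K := C)
      (fun t ht => ((hF t (hsub₀ ht)).continuousAt.sub continuousAt_const).continuousWithinAt)
      (fun t ht => ((hF t (hsub₀ (Ico_subset_Icc_self ht))).sub_const b).hasDerivWithinAt)
      (sub_eq_zero.2 hFt₀)
      (fun t ht => by
        rw [norm_mul]
        exact mul_le_mul_of_nonneg_right (hC t (Ico_subset_Icc_self ht)) (norm_nonneg _))
      t₁ (right_mem_Icc.2 ht₀.2)
  linarith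

theorem le_apply_of_hasDerivAt_mul_sub {F G : ℝ → ℝ} {a T b : ℝ}
    (hF : ∀ t ∈ Ico a T, HasDerivAt F (G t * (F t - b)) t)
    (hG : ∀ t ∈ Ico a T, ContinuousAt G t) (ha : b ≤ F a) :
    ∀ t ∈ Ico a T, b ≤ F t := fun t ht =>
  neg_le_neg_iff.1 <| apply_le_of_hasDerivAt_mul_sub (F := fun t => -F t) (b := -b)
    (fun t ht => (hF t ht).neg.congr_deriv (by ring)) hG (neg_le_neg ha) t ht

theorem mapsTo_Icc_neg_of_hasDerivAt_mul_one_add_div_mul_one_sub_div {x p : ℝ → ℝ} {a T τ : ℝ}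
    (hτ : 0 < τ) (hx : ∀ t ∈ Ico a T, HasDerivAt x (p t * (1 + x t / τ) * (1 - x t / τ)) t)
    (hp : ∀ t ∈ Ico a T, ContinuousAt p t) (ha : x a ∈ Icc (-τ) τ) :
    MapsTo x (Ico a T) (Icc (-τ) τ) := by
  have hcx : ∀ t ∈ Ico a T, ContinuousAt x t := fun t ht => (hx t ht).continuousAt
  intro t ht
  constructor
  · refine le_apply_of_hasDerivAt_mul_sub (G := fun t => p t * (1 - x t / τ) / τ)
      (fun t ht => (hx t ht).congr_deriv ?_) (fun t ht => ?_) ha.1 t ht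
    · field_simp
      ring
    · have := hp t ht; have := hcx t ht; fun_prop
  · refine apply_le_of_hasDerivAt_mul_sub (G := fun t => -(p t * (1 + x t / τ) / τ))
      (fun t ht => (hx t ht).congr_deriv ?_) (fun t ht => ?_) ha.2 t ht
    · field_simp
      ring
    · have := hp t ht; have := hcx t ht; fun_prop

theorem mapsTo_Icc_zero_of_hasDerivAt_mul_mul_one_sub_div {x p : ℝ → ℝ} {a T τ : ℝ}
    (hτ : 0 < τ) (hx : ∀ t ∈ Ico a T, HasDerivAt x (p t * x t * (1 - x t / τ)) t)
    (hp : ∀ t ∈ Ico a T, ContinuousAt p t) (ha : x a ∈ Icc 0 τ) :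
    MapsTo x (Ico a T) (Icc 0 τ) := by
  have hcx : ∀ t ∈ Ico a T, ContinuousAt x t := fun t ht => (hx t ht).continuousAt
  intro t ht
  constructor
  · refine le_apply_of_hasDerivAt_mul_sub (G := fun t => p t * (1 - x t / τ))
      (fun t ht => (hx t ht).congr_deriv ?_) (fun t ht => ?_) ha.1 t ht
    · ring
    · have := hp t ht; have := hcx t ht; fun_prop
  · refine apply_le_of_hasDerivAt_mul_sub (G := fun t => -(p t * x t / τ))
      (fun t ht => (hx t ht).congr_deriv ?_) (fun t ht => ?_) ha.2 t ht
    · field_simp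
      ring
    · have := hp t ht; have := hcx t ht; fun_prop

theorem stmt1_general
    (T : ℝ)
    (γ2 γ3 τC τA1 τA1C τA2 τA2C α1 α2 α3 αb2 αb3 : ℝ)
    (hτA1 : 0 < τA1)
    (hτA2 : 0 < τA2)
    (f0 : ℝ → ℝ → ℝ) (f1 : ℝ → ℝ) (f2 : ℝ → ℝ → ℝ)
    (Q0 Q1 Q2 Q3 A1 A2 : ℝ → ℝ)
    (hQ1' : ∀ t ∈ Set.Ico 0 T, HasDerivAt Q1 (f0 (Q2 t) (Q3 t) * Q0 t - f1 (A1 t) * Q1 t) t)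
    (hQ2' : ∀ t ∈ Set.Ico 0 T, HasDerivAt Q2
      (γ2 * Q2 t * (1 - (Q2 t + Q3 t) / τC + A1 t / τA1C + A2 t / τA2C)
        + f1 (A1 t) * Q1 t - f2 (A1 t) (A2 t) * Q2 t) t)
    (hQ3' : ∀ t ∈ Set.Ico 0 T, HasDerivAt Q3
      (γ3 * Q3 t * (1 - (Q2 t + Q3 t) / τC + A1 t / τA1C + A2 t / τA2C)
        + f2 (A1 t) (A2 t) * Q2 t) t)
    (hA1' : ∀ t ∈ Set.Ico 0 T, HasDerivAt A1
      ((α1 * Q1 t + α2 * Q2 t - α3 * Q3 t) * (1 + A1 t / τA1) * (1 - A1 t / τA1)) t)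
    (hA2' : ∀ t ∈ Set.Ico 0 T, HasDerivAt A2
      ((αb2 * Q2 t + αb3 * Q3 t) * A2 t * (1 - A2 t / τA2)) t)
    (hA1i : A1 0 ∈ Set.Icc (-τA1) τA1) (hA2i : A2 0 ∈ Set.Icc 0 τA2) :
    ∀ t ∈ Set.Ico 0 T, (-τA1 ≤ A1 t ∧ A1 t ≤ τA1) ∧ (0 ≤ A2 t ∧ A2 t ≤ τA2) := by
  have hQ1 : ∀ t ∈ Ico 0 T, ContinuousAt Q1 t := fun t ht => (hQ1' t ht).continuousAt
  have hQ2 : ∀ t ∈ Ico 0 T, ContinuousAt Q2 t := fun t ht => (hQ2' t ht).continuousAt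
  have hQ3 : ∀ t ∈ Ico 0 T, ContinuousAt Q3 t := fun t ht => (hQ3' t ht).continuousAt
  have hA1 := mapsTo_Icc_neg_of_hasDerivAt_mul_one_add_div_mul_one_sub_div hτA1 hA1'
    (fun t ht => by have := hQ1 t ht; have := hQ2 t ht; have := hQ3 t ht; fun_prop) hA1i
  have hA2 := mapsTo_Icc_zero_of_hasDerivAt_mul_mul_one_sub_div hτA2 hA2'
    (fun t ht => by have := hQ2 t ht; have := hQ3 t ht; fun_prop) hA2i
  exact fun t ht => ⟨hA1 ht, hA2 ht⟩

theorem stmt1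
    (T : ℝ) (hT : 0 < T)
    (γ2 γ3 τC τA1 τA1C τA2 τA2C α1 α2 α3 αb2 αb3 : ℝ)
    (hγ2 : 0 < γ2) (hγ3 : 0 < γ3) (hτC : 0 < τC) (hτA1 : 0 < τA1)
    (hτA1C : 0 < τA1C) (hτA2 : 0 < τA2) (hτA2C : 0 < τA2C)
    (hα1 : 0 < α1) (hα2 : 0 < α2) (hα3 : 0 < α3) (hαb2 : 0 < αb2) (hαb3 : 0 < αb3)
    (f0 : ℝ → ℝ → ℝ) (f1 : ℝ → ℝ) (f2 : ℝ → ℝ → ℝ)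
    (K0 K1 K2 : NNReal)
    (hf0lip : LipschitzWith K0 (fun p : ℝ × ℝ => f0 p.1 p.2))
    (hf1lip : LipschitzWith K1 f1)
    (hf2lip : LipschitzWith K2 (fun p : ℝ × ℝ => f2 p.1 p.2))
    (m0 M0 m1 M1 m2 M2 : ℝ) (hm0 : 0 < m0) (hm1 : 0 < m1) (hm2 : 0 < m2)
    (hf0bd : ∀ x y, m0 ≤ f0 x y ∧ f0 x y ≤ M0)
    (hf1bd : ∀ x, m1 ≤ f1 x ∧ f1 x ≤ M1)
    (hf2bd : ∀ x y, m2 ≤ f2 x y ∧ f2 x y ≤ M2)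
    (Q0 Q1 Q2 Q3 A1 A2 : ℝ → ℝ)
    (hQ0' : ∀ t ∈ Set.Ico 0 T, HasDerivAt Q0 (-(f0 (Q2 t) (Q3 t)) * Q0 t) t)
    (hQ1' : ∀ t ∈ Set.Ico 0 T, HasDerivAt Q1 (f0 (Q2 t) (Q3 t) * Q0 t - f1 (A1 t) * Q1 t) t)
    (hQ2' : ∀ t ∈ Set.Ico 0 T, HasDerivAt Q2
      (γ2 * Q2 t * (1 - (Q2 t + Q3 t) / τC + A1 t / τA1C + A2 t / τA2C)
        + f1 (A1 t) * Q1 t - f2 (A1 t) (A2 t) * Q2 t) t)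
    (hQ3' : ∀ t ∈ Set.Ico 0 T, HasDerivAt Q3
      (γ3 * Q3 t * (1 - (Q2 t + Q3 t) / τC + A1 t / τA1C + A2 t / τA2C)
        + f2 (A1 t) (A2 t) * Q2 t) t)
    (hA1' : ∀ t ∈ Set.Ico 0 T, HasDerivAt A1
      ((α1 * Q1 t + α2 * Q2 t - α3 * Q3 t) * (1 + A1 t / τA1) * (1 - A1 t / τA1)) t)
    (hA2' : ∀ t ∈ Set.Ico 0 T, HasDerivAt A2
      ((αb2 * Q2 t + αb3 * Q3 t) * A2 t * (1 - A2 t / τA2)) t)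
    (hQ0i : 0 ≤ Q0 0) (hQ1i : 0 ≤ Q1 0) (hQ2i : 0 ≤ Q2 0) (hQ3i : 0 ≤ Q3 0)
    (hA1i : A1 0 ∈ Set.Icc (-τA1) τA1) (hA2i : A2 0 ∈ Set.Icc 0 τA2) :
    ∀ t ∈ Set.Ico 0 T, (-τA1 ≤ A1 t ∧ A1 t ≤ τA1) ∧ (0 ≤ A2 t ∧ A2 t ≤ τA2) :=
  stmt1_general T γ2 γ3 τC τA1 τA1C τA2 τA2C α1 α2 α3 αb2 αb3 hτA1 hτA2 f0 f1 f2 Q0 Q1 Q2 Q3 A1 A2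
    hQ1' hQ2' hQ3' hA1' hA2' hA1i hA2i
end

section
/- Let (Q0, Q1, Q2, Q3, A1, A2) be a solution of system (S) on [0, T) with initial data satisfying Q_i(0) ≥ 0 for i = 0,1,2,3, A1(0) ∈ [-τ_{A1}, τ_{A1}] and A2(0) ∈ [0, τ_{A2}]. Assume moreover m0 = m1. Then for all t ∈ [0, T), Q1(t) ≤ Q1(0) e^{-m1 t} + M0 Q0(0) t e^{-m1 t}. -/
lemma my_nonneg_aux (y d : ℝ → ℝ) (t : ℝ) (ht : 0 ≤ t)
    (hy : ∀ s ∈ Set.Icc 0 t, HasDerivAt y (d s) s)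
    (h0 : 0 ≤ y 0)
    (hd : ∀ s ∈ Set.Icc 0 t, y s < 0 → 0 ≤ d s) :
    0 ≤ y t := by
  by_contra hneg
  push_neg at hneg
  set S : Set ℝ := Set.Icc 0 t ∩ y ⁻¹' Set.Ici 0 with hS
  have hcont : ContinuousOn y (Set.Icc 0 t) := fun s hs =>
    (hy s hs).continuousAt.continuousWithinAt
  have hScl : IsClosed S :=
    hcont.preimage_isClosed_of_isClosed isClosed_Icc isClosed_Ici
  have h0S : (0 : ℝ) ∈ S := ⟨⟨le_refl 0, ht⟩, h0⟩
  have hbdd : BddAbove S := ⟨t, fun s hs => hs.1.2⟩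
  have ht0 : sSup S ∈ S := hScl.csSup_mem ⟨0, h0S⟩ hbdd
  set t0 := sSup S with ht0def
  have ht0le : t0 ≤ t := ht0.1.2
  have hy0 : 0 ≤ y t0 := ht0.2
  have ht0lt : t0 < t := lt_of_le_of_ne ht0le (fun h => absurd hy0 (by rw [h]; exact not_le.2 hneg))
  have hsneg : ∀ s ∈ Set.Ioc t0 t, y s < 0 := by
    intro s hs
    by_contra hge
    push_neg at hge
    have hmem : s ∈ S := ⟨⟨le_trans ht0.1.1 hs.1.le, hs.2⟩, hge⟩
    exact absurd (le_csSup hbdd hmem) (not_le.2 hs.1)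
  have hmono : MonotoneOn y (Set.Icc t0 t) := by
    have hsub : Set.Icc t0 t ⊆ Set.Icc 0 t := fun s hs => ⟨le_trans ht0.1.1 hs.1, hs.2⟩
    apply monotoneOn_of_deriv_nonneg (convex_Icc _ _) (hcont.mono hsub)
    · intro s hs
      rw [interior_Icc] at hs
      exact ((hy s (hsub ⟨hs.1.le, hs.2.le⟩)).differentiableAt).differentiableWithinAt
    · intro s hs
      rw [interior_Icc] at hs
      have hs' : s ∈ Set.Icc 0 t := ⟨le_trans ht0.1.1 hs.1.le, hs.2.le⟩
      rw [(hy s hs').deriv]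
      exact hd s hs' (hsneg s ⟨hs.1, hs.2.le⟩)
  have := hmono ⟨le_refl t0, ht0le⟩ ⟨ht0le, le_refl t⟩ ht0le
  linarith

lemma my_anti_aux (y d : ℝ → ℝ) (t : ℝ) (ht : 0 ≤ t)
    (hy : ∀ s ∈ Set.Icc 0 t, HasDerivAt y (d s) s)
    (hd : ∀ s ∈ Set.Icc 0 t, d s ≤ 0) :
    y t ≤ y 0 := by
  have hcont : ContinuousOn y (Set.Icc 0 t) := fun s hs =>
    (hy s hs).continuousAt.continuousWithinAt
  have hanti : AntitoneOn y (Set.Icc 0 t) := by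
    apply antitoneOn_of_deriv_nonpos (convex_Icc _ _) hcont
    · intro s hs
      rw [interior_Icc] at hs
      exact ((hy s ⟨hs.1.le, hs.2.le⟩).differentiableAt).differentiableWithinAt
    · intro s hs
      rw [interior_Icc] at hs
      rw [(hy s ⟨hs.1.le, hs.2.le⟩).deriv]
      exact hd s ⟨hs.1.le, hs.2.le⟩
  exact hanti ⟨le_refl 0, ht⟩ ⟨ht, le_refl t⟩ ht


theorem stmt4
    (T : ℝ) (hT : 0 < T)
    (γ2 γ3 τC τA1 τA1C τA2 τA2C α1 α2 α3 αb2 αb3 : ℝ)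
    (hγ2 : 0 < γ2) (hγ3 : 0 < γ3) (hτC : 0 < τC) (hτA1 : 0 < τA1)
    (hτA1C : 0 < τA1C) (hτA2 : 0 < τA2) (hτA2C : 0 < τA2C)
    (hα1 : 0 < α1) (hα2 : 0 < α2) (hα3 : 0 < α3) (hαb2 : 0 < αb2) (hαb3 : 0 < αb3)
    (f0 : ℝ → ℝ → ℝ) (f1 : ℝ → ℝ) (f2 : ℝ → ℝ → ℝ)
    (K0 K1 K2 : NNReal)
    (hf0lip : LipschitzWith K0 (fun p : ℝ × ℝ => f0 p.1 p.2))
    (hf1lip : LipschitzWith K1 f1)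
    (hf2lip : LipschitzWith K2 (fun p : ℝ × ℝ => f2 p.1 p.2))
    (m0 M0 m1 M1 m2 M2 : ℝ) (hm0 : 0 < m0) (hm1 : 0 < m1) (hm2 : 0 < m2)
    (hf0bd : ∀ x y, m0 ≤ f0 x y ∧ f0 x y ≤ M0)
    (hf1bd : ∀ x, m1 ≤ f1 x ∧ f1 x ≤ M1)
    (hf2bd : ∀ x y, m2 ≤ f2 x y ∧ f2 x y ≤ M2)
    (Q0 Q1 Q2 Q3 A1 A2 : ℝ → ℝ)
    (hQ0' : ∀ t ∈ Set.Ico 0 T, HasDerivAt Q0 (-(f0 (Q2 t) (Q3 t)) * Q0 t) t)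
    (hQ1' : ∀ t ∈ Set.Ico 0 T, HasDerivAt Q1 (f0 (Q2 t) (Q3 t) * Q0 t - f1 (A1 t) * Q1 t) t)
    (hQ2' : ∀ t ∈ Set.Ico 0 T, HasDerivAt Q2
      (γ2 * Q2 t * (1 - (Q2 t + Q3 t) / τC + A1 t / τA1C + A2 t / τA2C)
        + f1 (A1 t) * Q1 t - f2 (A1 t) (A2 t) * Q2 t) t)
    (hQ3' : ∀ t ∈ Set.Ico 0 T, HasDerivAt Q3
      (γ3 * Q3 t * (1 - (Q2 t + Q3 t) / τC + A1 t / τA1C + A2 t / τA2C)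
        + f2 (A1 t) (A2 t) * Q2 t) t)
    (hA1' : ∀ t ∈ Set.Ico 0 T, HasDerivAt A1
      ((α1 * Q1 t + α2 * Q2 t - α3 * Q3 t) * (1 + A1 t / τA1) * (1 - A1 t / τA1)) t)
    (hA2' : ∀ t ∈ Set.Ico 0 T, HasDerivAt A2
      ((αb2 * Q2 t + αb3 * Q3 t) * A2 t * (1 - A2 t / τA2)) t)
    (hQ0i : 0 ≤ Q0 0) (hQ1i : 0 ≤ Q1 0) (hQ2i : 0 ≤ Q2 0) (hQ3i : 0 ≤ Q3 0)
    (hA1i : A1 0 ∈ Set.Icc (-τA1) τA1) (hA2i : A2 0 ∈ Set.Icc 0 τA2)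
    (hmm : m0 = m1) :
    ∀ t ∈ Set.Ico 0 T,
      Q1 t ≤ Q1 0 * Real.exp (-m1 * t) + M0 * Q0 0 * t * Real.exp (-m1 * t) := by
  subst hmm
  intro t ht
  obtain ⟨ht0, htT⟩ := ht
  have hsub : Set.Icc 0 t ⊆ Set.Ico 0 T := fun s hs => ⟨hs.1, lt_of_le_of_lt hs.2 htT⟩
  have hM0 : 0 < M0 := lt_of_lt_of_le hm0 (le_trans (hf0bd 0 0).1 (hf0bd 0 0).2)
  have hexp : ∀ r : ℝ, HasDerivAt (fun u => Real.exp (m0 * u)) (Real.exp (m0 * r) * m0) r := by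
    intro r
    have h := ((hasDerivAt_id r).const_mul m0).exp
    simpa [mul_comm] using h
  -- Q0 nonneg
  have hQ0nn : ∀ s ∈ Set.Icc 0 t, 0 ≤ Q0 s := by
    intro s hs
    refine my_nonneg_aux Q0 (fun r => -(f0 (Q2 r) (Q3 r)) * Q0 r) s hs.1
      (fun r hr => hQ0' r (hsub ⟨hr.1, le_trans hr.2 hs.2⟩)) hQ0i ?_
    intro r _ hneg
    show (0:ℝ) ≤ -(f0 (Q2 r) (Q3 r)) * Q0 r
    nlinarith [(hf0bd (Q2 r) (Q3 r)).1]
  -- Q1 nonneg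
  have hQ1nn : ∀ s ∈ Set.Icc 0 t, 0 ≤ Q1 s := by
    intro s hs
    refine my_nonneg_aux Q1 (fun r => f0 (Q2 r) (Q3 r) * Q0 r - f1 (A1 r) * Q1 r) s hs.1
      (fun r hr => hQ1' r (hsub ⟨hr.1, le_trans hr.2 hs.2⟩)) hQ1i ?_
    intro r hr hneg
    show (0:ℝ) ≤ f0 (Q2 r) (Q3 r) * Q0 r - f1 (A1 r) * Q1 r
    have h1 := hQ0nn r ⟨hr.1, le_trans hr.2 hs.2⟩
    nlinarith [(hf0bd (Q2 r) (Q3 r)).1, (hf1bd (A1 r)).1]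
  -- Q0 decay
  have hQ0bd : ∀ s ∈ Set.Icc 0 t, Q0 s * Real.exp (m0 * s) ≤ Q0 0 := by
    intro s hs
    have key : Q0 s * Real.exp (m0 * s) ≤ Q0 0 * Real.exp (m0 * 0) := by
      refine my_anti_aux (fun r => Q0 r * Real.exp (m0 * r))
        (fun r => -(f0 (Q2 r) (Q3 r)) * Q0 r * Real.exp (m0 * r)
          + Q0 r * (Real.exp (m0 * r) * m0)) s hs.1 ?_ ?_
      · intro r hr
        exact (hQ0' r (hsub ⟨hr.1, le_trans hr.2 hs.2⟩)).mul (hexp r)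
      · intro r hr
        show -(f0 (Q2 r) (Q3 r)) * Q0 r * Real.exp (m0 * r)
          + Q0 r * (Real.exp (m0 * r) * m0) ≤ 0
        have h1 := hQ0nn r ⟨hr.1, le_trans hr.2 hs.2⟩
        have h2 := (hf0bd (Q2 r) (Q3 r)).1
        have he := Real.exp_pos (m0 * r)
        nlinarith [mul_nonneg (mul_nonneg (sub_nonneg.2 h2) h1) he.le]
    simpa using key
  -- final comparison
  have key : Q1 t * Real.exp (m0 * t) - M0 * Q0 0 * t
      ≤ Q1 0 * Real.exp (m0 * 0) - M0 * Q0 0 * 0 := by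
    refine my_anti_aux (fun r => Q1 r * Real.exp (m0 * r) - M0 * Q0 0 * r)
      (fun r => ((f0 (Q2 r) (Q3 r) * Q0 r - f1 (A1 r) * Q1 r) * Real.exp (m0 * r)
        + Q1 r * (Real.exp (m0 * r) * m0)) - M0 * Q0 0) t ht0 ?_ ?_
    · intro r hr
      have hlin : HasDerivAt (fun u => M0 * Q0 0 * u) (M0 * Q0 0) r := by
        simpa using (hasDerivAt_id r).const_mul (M0 * Q0 0)
      exact ((hQ1' r (hsub hr)).mul (hexp r)).sub hlin
    · intro r hr
      show ((f0 (Q2 r) (Q3 r) * Q0 r - f1 (A1 r) * Q1 r) * Real.exp (m0 * r)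
        + Q1 r * (Real.exp (m0 * r) * m0)) - M0 * Q0 0 ≤ 0
      have h1 := hQ0nn r hr
      have h2 := hQ1nn r hr
      have h3 := hQ0bd r hr
      have h4 := (hf0bd (Q2 r) (Q3 r)).2
      have h5 := (hf1bd (A1 r)).1
      have he := Real.exp_pos (m0 * r)
      nlinarith [mul_le_mul_of_nonneg_left h3 hM0.le,
        mul_le_mul_of_nonneg_right h4 (mul_nonneg h1 he.le),
        mul_nonneg (mul_nonneg (sub_nonneg.2 h5) h2) he.le]
  have he := Real.exp_pos (m0 * t)
  have hw : Q1 t * Real.exp (m0 * t) ≤ Q1 0 + M0 * Q0 0 * t := by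
    have h0 : Real.exp (m0 * 0) = 1 := by simp
    rw [h0] at key
    linarith
  have hdiv : Q1 t ≤ (Q1 0 + M0 * Q0 0 * t) * (Real.exp (m0 * t))⁻¹ := by
    rw [← div_eq_mul_inv, le_div_iff₀ he]
    exact hw
  have hrw : Real.exp (-m0 * t) = (Real.exp (m0 * t))⁻¹ := by
    rw [neg_mul, Real.exp_neg]
  have hexpand : (Q1 0 + M0 * Q0 0 * t) * (Real.exp (m0 * t))⁻¹
      = Q1 0 * (Real.exp (m0 * t))⁻¹ + M0 * Q0 0 * t * (Real.exp (m0 * t))⁻¹ := by ring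
  rw [hrw]
  linarith [hdiv, hexpand.le]
end

section
/- Let (Q0, Q1, Q2, Q3, A1, A2) be a solution of system (S) on [0, T) with initial data satisfying Q_i(0) ≥ 0 for i = 0,1,2,3, A1(0) ∈ [-τ_{A1}, τ_{A1}] and A2(0) ∈ [0, τ_{A2}]. Assume moreover m0 ≠ m1, and write m̲ = min(m0, m1). Then for all t ∈ [0, T), Q1(t) ≤ [e^{-(m1 - m̲) t} Q1(0) + M0 Q0(0) (e^{-(m0 - m̲) t} - e^{-(m1 - m̲) t})/(m1 - m0)] e^{-m̲ t}. In particular, Q1 decays exponentially fast to 0 as t → ∞. -/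
lemma antitone_aux {T : ℝ} {f d : ℝ → ℝ}
    (hf : ∀ s ∈ Set.Ico 0 T, HasDerivAt f (d s) s)
    (hd : ∀ s ∈ Set.Ico 0 T, d s ≤ 0) :
    ∀ t ∈ Set.Ico 0 T, f t ≤ f 0 := by
  intro t ht
  have hsub : Set.Icc (0:ℝ) t ⊆ Set.Ico 0 T :=
    fun x hx => ⟨hx.1, lt_of_le_of_lt hx.2 ht.2⟩
  have h := antitoneOn_of_deriv_nonpos (convex_Icc 0 t)
    (fun x hx => (hf x (hsub hx)).continuousAt.continuousWithinAt)
    (fun x hx => by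
      rw [interior_Icc] at hx
      exact (hf x (hsub (Set.Ioo_subset_Icc_self hx))).differentiableAt.differentiableWithinAt)
    (fun x hx => by
      rw [interior_Icc] at hx
      rw [(hf x (hsub (Set.Ioo_subset_Icc_self hx))).deriv]
      exact hd x (hsub (Set.Ioo_subset_Icc_self hx)))
  exact h ⟨le_refl 0, ht.1⟩ ⟨ht.1, le_refl t⟩ ht.1

lemma nonneg_aux {T : ℝ} {f d : ℝ → ℝ}
    (hf : ∀ s ∈ Set.Ico 0 T, HasDerivAt f (d s) s)
    (h0 : 0 ≤ f 0)
    (hd : ∀ s ∈ Set.Ico 0 T, f s ≤ 0 → 0 ≤ d s) :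
    ∀ t ∈ Set.Ico 0 T, 0 ≤ f t := by
  intro t1 ht1
  by_contra h
  push_neg at h
  have hsub : Set.Icc (0:ℝ) t1 ⊆ Set.Ico 0 T :=
    fun x hx => ⟨hx.1, lt_of_le_of_lt hx.2 ht1.2⟩
  have hcont : ContinuousOn f (Set.Icc 0 t1) :=
    fun x hx => (hf x (hsub hx)).continuousAt.continuousWithinAt
  set S : Set ℝ := Set.Icc 0 t1 ∩ f ⁻¹' Set.Ici 0 with hS
  have hSne : S.Nonempty := ⟨0, ⟨le_refl 0, ht1.1⟩, h0⟩
  have hSbd : BddAbove S := ⟨t1, fun x hx => hx.1.2⟩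
  have hSclosed : IsClosed S :=
    hcont.preimage_isClosed_of_isClosed isClosed_Icc isClosed_Ici
  set a := sSup S with ha
  have haS : a ∈ S := hSclosed.csSup_mem hSne hSbd
  have ha0 : 0 ≤ a := haS.1.1
  have hat1 : a ≤ t1 := haS.1.2
  have hfa : 0 ≤ f a := haS.2
  have halt : a < t1 := by
    rcases lt_or_eq_of_le hat1 with h' | h'
    · exact h'
    · exact absurd (h' ▸ hfa) (not_le.mpr h)
  have hneg : ∀ x ∈ Set.Ioc a t1, f x ≤ 0 := by
    intro x hx
    by_contra hge
    push_neg at hge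
    have : x ∈ S := ⟨⟨le_trans ha0 hx.1.le, hx.2⟩, hge.le⟩
    exact absurd (le_csSup hSbd this) (not_le.mpr hx.1)
  have hsub2 : Set.Icc a t1 ⊆ Set.Icc 0 t1 := Set.Icc_subset_Icc ha0 le_rfl
  have hmono : MonotoneOn f (Set.Icc a t1) := by
    apply monotoneOn_of_deriv_nonneg (convex_Icc a t1) (hcont.mono hsub2)
    · intro x hx
      rw [interior_Icc] at hx
      exact (hf x (hsub (hsub2 (Set.Ioo_subset_Icc_self hx)))).differentiableAt.differentiableWithinAt
    · intro x hx
      rw [interior_Icc] at hx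
      rw [(hf x (hsub (hsub2 (Set.Ioo_subset_Icc_self hx)))).deriv]
      exact hd x (hsub (hsub2 (Set.Ioo_subset_Icc_self hx))) (hneg x ⟨hx.1, hx.2.le⟩)
  have := hmono ⟨le_refl a, halt.le⟩ ⟨halt.le, le_refl t1⟩ halt.le
  linarith

theorem stmt5
    (T : ℝ) (hT : 0 < T)
    (γ2 γ3 τC τA1 τA1C τA2 τA2C α1 α2 α3 αb2 αb3 : ℝ)
    (hγ2 : 0 < γ2) (hγ3 : 0 < γ3) (hτC : 0 < τC) (hτA1 : 0 < τA1)
    (hτA1C : 0 < τA1C) (hτA2 : 0 < τA2) (hτA2C : 0 < τA2C)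
    (hα1 : 0 < α1) (hα2 : 0 < α2) (hα3 : 0 < α3) (hαb2 : 0 < αb2) (hαb3 : 0 < αb3)
    (f0 : ℝ → ℝ → ℝ) (f1 : ℝ → ℝ) (f2 : ℝ → ℝ → ℝ)
    (K0 K1 K2 : NNReal)
    (hf0lip : LipschitzWith K0 (fun p : ℝ × ℝ => f0 p.1 p.2))
    (hf1lip : LipschitzWith K1 f1)
    (hf2lip : LipschitzWith K2 (fun p : ℝ × ℝ => f2 p.1 p.2))
    (m0 M0 m1 M1 m2 M2 : ℝ) (hm0 : 0 < m0) (hm1 : 0 < m1) (hm2 : 0 < m2)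
    (hf0bd : ∀ x y, m0 ≤ f0 x y ∧ f0 x y ≤ M0)
    (hf1bd : ∀ x, m1 ≤ f1 x ∧ f1 x ≤ M1)
    (hf2bd : ∀ x y, m2 ≤ f2 x y ∧ f2 x y ≤ M2)
    (Q0 Q1 Q2 Q3 A1 A2 : ℝ → ℝ)
    (hQ0' : ∀ t ∈ Set.Ico 0 T, HasDerivAt Q0 (-(f0 (Q2 t) (Q3 t)) * Q0 t) t)
    (hQ1' : ∀ t ∈ Set.Ico 0 T, HasDerivAt Q1 (f0 (Q2 t) (Q3 t) * Q0 t - f1 (A1 t) * Q1 t) t)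
    (hQ2' : ∀ t ∈ Set.Ico 0 T, HasDerivAt Q2
      (γ2 * Q2 t * (1 - (Q2 t + Q3 t) / τC + A1 t / τA1C + A2 t / τA2C)
        + f1 (A1 t) * Q1 t - f2 (A1 t) (A2 t) * Q2 t) t)
    (hQ3' : ∀ t ∈ Set.Ico 0 T, HasDerivAt Q3
      (γ3 * Q3 t * (1 - (Q2 t + Q3 t) / τC + A1 t / τA1C + A2 t / τA2C)
        + f2 (A1 t) (A2 t) * Q2 t) t)
    (hA1' : ∀ t ∈ Set.Ico 0 T, HasDerivAt A1
      ((α1 * Q1 t + α2 * Q2 t - α3 * Q3 t) * (1 + A1 t / τA1) * (1 - A1 t / τA1)) t)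
    (hA2' : ∀ t ∈ Set.Ico 0 T, HasDerivAt A2
      ((αb2 * Q2 t + αb3 * Q3 t) * A2 t * (1 - A2 t / τA2)) t)
    (hQ0i : 0 ≤ Q0 0) (hQ1i : 0 ≤ Q1 0) (hQ2i : 0 ≤ Q2 0) (hQ3i : 0 ≤ Q3 0)
    (hA1i : A1 0 ∈ Set.Icc (-τA1) τA1) (hA2i : A2 0 ∈ Set.Icc 0 τA2)
    (hmm : m0 ≠ m1) :
    ∀ t ∈ Set.Ico 0 T,
      Q1 t ≤ (Real.exp (-(m1 - min m0 m1) * t) * Q1 0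
          + M0 * Q0 0 * (Real.exp (-(m0 - min m0 m1) * t)
            - Real.exp (-(m1 - min m0 m1) * t)) / (m1 - m0))
        * Real.exp (-(min m0 m1) * t) := by
  have hne : m1 - m0 ≠ 0 := sub_ne_zero.mpr (Ne.symm hmm)
  have hM0 : 0 < M0 := lt_of_lt_of_le hm0 ((hf0bd 0 0).1.trans (hf0bd 0 0).2)
  have hexp : ∀ (k x : ℝ), HasDerivAt (fun y => Real.exp (k * y)) (k * Real.exp (k * x)) x := by
    intro k x
    have := ((hasDerivAt_id x).const_mul k).exp
    simpa [mul_comm] using this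
  -- Q0 nonnegative
  have hQ0nn : ∀ s ∈ Set.Ico (0:ℝ) T, 0 ≤ Q0 s := by
    apply nonneg_aux hQ0' hQ0i
    intro s hs hsle
    have h1 := (hf0bd (Q2 s) (Q3 s)).1
    nlinarith
  -- Q1 nonnegative
  have hQ1nn : ∀ s ∈ Set.Ico (0:ℝ) T, 0 ≤ Q1 s := by
    apply nonneg_aux hQ1' hQ1i
    intro s hs hsle
    have h1 := (hf0bd (Q2 s) (Q3 s)).1
    have h2 := (hf1bd (A1 s)).1
    have h3 := hQ0nn s hs
    nlinarith
  -- Q0 decay: Q0 s * exp (m0 s) ≤ Q0 0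
  have hQ0bd : ∀ s ∈ Set.Ico (0:ℝ) T, Q0 s * Real.exp (m0 * s) ≤ Q0 0 := by
    have h := antitone_aux
      (f := fun s => Q0 s * Real.exp (m0 * s))
      (d := fun s => (-(f0 (Q2 s) (Q3 s)) * Q0 s) * Real.exp (m0 * s)
        + Q0 s * (m0 * Real.exp (m0 * s)))
      (fun s hs => (hQ0' s hs).mul (hexp m0 s))
      (fun s hs => by
        have h1 := (hf0bd (Q2 s) (Q3 s)).1
        have h2 := hQ0nn s hs
        have h3 := Real.exp_pos (m0 * s)
        beta_reduce
        nlinarith [mul_nonneg (mul_nonneg (sub_nonneg.mpr h1) h2) h3.le])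
    intro s hs
    have h2 := h s hs
    simpa using h2
  -- main comparison function
  set c : ℝ := M0 * Q0 0 / (m1 - m0) with hc2
  have hc : c * (m1 - m0) = M0 * Q0 0 := div_mul_cancel₀ _ hne
  have hw : ∀ s ∈ Set.Ico (0:ℝ) T,
      Q1 s * Real.exp (m1 * s) - c * Real.exp ((m1 - m0) * s) ≤ Q1 0 - c := by
    have h := antitone_aux
      (f := fun s => Q1 s * Real.exp (m1 * s) - c * Real.exp ((m1 - m0) * s))
      (d := fun s => ((f0 (Q2 s) (Q3 s) * Q0 s - f1 (A1 s) * Q1 s) * Real.exp (m1 * s)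
          + Q1 s * (m1 * Real.exp (m1 * s)))
        - c * ((m1 - m0) * Real.exp ((m1 - m0) * s)))
      (fun s hs => ((hQ1' s hs).mul (hexp m1 s)).sub ((hexp (m1 - m0) s).const_mul c))
      (fun s hs => by
        have h0 := hQ0nn s hs
        have h1 := hQ1nn s hs
        have hf0s := hf0bd (Q2 s) (Q3 s)
        have hf1s := hf1bd (A1 s)
        have hQ0b := hQ0bd s hs
        have hA : (0:ℝ) < Real.exp (m1 * s) := Real.exp_pos _
        have hB : (0:ℝ) < Real.exp (m0 * s) := Real.exp_pos _
        have hX : (0:ℝ) < Real.exp ((m1 - m0) * s) := Real.exp_pos _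
        have hXB : Real.exp ((m1 - m0) * s) * Real.exp (m0 * s) = Real.exp (m1 * s) := by
          rw [← Real.exp_add]; congr 1; ring
        have g1 : f0 (Q2 s) (Q3 s) * Q0 s * Real.exp (m1 * s)
            ≤ M0 * Q0 s * Real.exp (m1 * s) :=
          mul_le_mul_of_nonneg_right (mul_le_mul_of_nonneg_right hf0s.2 h0) hA.le
        have g2 : (m1 - f1 (A1 s)) * (Q1 s * Real.exp (m1 * s)) ≤ 0 :=
          mul_nonpos_of_nonpos_of_nonneg (sub_nonpos.mpr hf1s.1) (mul_nonneg h1 hA.le)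
        have g3 : M0 * Q0 s * Real.exp (m1 * s)
            ≤ M0 * Q0 0 * Real.exp ((m1 - m0) * s) := by
          have heq : M0 * Q0 s * Real.exp (m1 * s)
              = M0 * (Q0 s * Real.exp (m0 * s)) * Real.exp ((m1 - m0) * s) := by
            rw [← hXB]; ring
          rw [heq]
          exact mul_le_mul_of_nonneg_right (mul_le_mul_of_nonneg_left hQ0b hM0.le) hX.le
        have hc' : c * ((m1 - m0) * Real.exp ((m1 - m0) * s))
            = M0 * Q0 0 * Real.exp ((m1 - m0) * s) := by
          rw [show c * ((m1 - m0) * Real.exp ((m1 - m0) * s))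
              = c * (m1 - m0) * Real.exp ((m1 - m0) * s) by ring, hc]
        beta_reduce
        rw [hc']
        nlinarith [g1, g2, g3])
    intro s hs
    have h2 := h s hs
    simp only [mul_zero, Real.exp_zero, mul_one] at h2
    exact h2
  intro t ht
  have hu3 : (0:ℝ) < Real.exp (m1 * t) := Real.exp_pos _
  have E1 : Real.exp (-(m1 - min m0 m1) * t) * Real.exp (-(min m0 m1) * t)
      * Real.exp (m1 * t) = 1 := by
    rw [← Real.exp_add, ← Real.exp_add,
      show -(m1 - min m0 m1) * t + -(min m0 m1) * t + m1 * t = 0 by ring, Real.exp_zero]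
  have E2 : Real.exp (-(m0 - min m0 m1) * t) * Real.exp (-(min m0 m1) * t)
      * Real.exp (m1 * t) = Real.exp ((m1 - m0) * t) := by
    rw [← Real.exp_add, ← Real.exp_add]; congr 1; ring
  have key : (Real.exp (-(m1 - min m0 m1) * t) * Q1 0
        + M0 * Q0 0 * (Real.exp (-(m0 - min m0 m1) * t)
          - Real.exp (-(m1 - min m0 m1) * t)) / (m1 - m0))
      * Real.exp (-(min m0 m1) * t) * Real.exp (m1 * t)
      = Q1 0 - c + c * Real.exp ((m1 - m0) * t) := by
    rw [hc2]
    linear_combination (Q1 0 - M0 * Q0 0 / (m1 - m0)) * E1 + (M0 * Q0 0 / (m1 - m0)) * E2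
  refine le_of_mul_le_mul_right ?_ hu3
  rw [key]
  have hwt := hw t ht
  linarith
end

section
/- Let (Q0, Q1, Q2, Q3, A1, A2) be a solution of system (S) on [0, T) with initial data satisfying Q_i(0) ≥ 0 for i = 0,1,2,3, A1(0) ∈ [-τ_{A1}, τ_{A1}] and A2(0) ∈ [0, τ_{A2}]. Then Q2 and Q3 are bounded on [0, T): there exist constants C2(T) > 0 and C3(T) > 0 such that Q2(t) ≤ C2(T) and Q3(t) ≤ C3(T) for all t ∈ [0, T). -/
/-!
The compartments `Q0, Q1, Q2, Q3` stay nonnegative because each equation is quasi-positive: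
where a component vanishes its derivative is nonnegative, and a barrier argument makes this
rigorous. `Q0 + Q1` is nonincreasing, so `Q1 ≤ Q0(0) + Q1(0)`. The factors
`1 - A1/τ_{A1}` and `1 - A2/τ_{A2}` keep `A1 ≤ τ_{A1}` and `A2 ≤ τ_{A2}`, so the growth factor
of `Q2` and `Q3` is bounded by `1 + τ_{A1}/τ_{A1}^C + τ_{A2}/τ_{A2}^C`. The transfer term
`f2 Q2` cancels in `(Q2 + Q3)'`, which is then at most linear in `Q2 + Q3`, and Grönwall's
inequality bounds `Q2 + Q3` on the bounded interval `[0, T)`.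
-/

open Set Real Filter
open scoped Topology

theorem nonpos_of_deriv_right_le_mul_of_pos {f f' : ℝ → ℝ} {a b K : ℝ}
    (hf : ContinuousOn f (Icc a b)) (hf' : ∀ t ∈ Ico a b, HasDerivWithinAt f (f' t) (Ici t) t)
    (ha : f a ≤ 0) (bound : ∀ t ∈ Ico a b, 0 < f t → f' t ≤ K * f t) :
    ∀ t ∈ Icc a b, f t ≤ 0 := by
  intro t ht
  -- `ε e^{(K+1)(s-a)}` is a barrier: wherever `f` touches it, `f` grows strictly slower.
  have barrier : ∀ ε > 0, f t ≤ ε * exp ((K + 1) * (t - a)) := by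
    intro ε hε
    refine image_le_of_deriv_right_lt_deriv_boundary hf hf'
      (B := fun s => ε * exp ((K + 1) * (s - a)))
      (B' := fun s => (K + 1) * (ε * exp ((K + 1) * (s - a)))) (by simpa using ha.trans hε.le)
      (fun s => ?_) (fun s hs hfs => ?_) ht
    · exact (((hasDerivAt_id' s).sub_const a).const_mul (K + 1)).exp.const_mul ε
        |>.congr_deriv (by ring)
    · have hpos : 0 < f s := hfs ▸ by positivity
      calc f' s ≤ K * f s := bound s hs hpos
        _ < (K + 1) * f s := by linarith
        _ = _ := by rw [hfs]
  have hlim : Tendsto (fun ε => ε * exp ((K + 1) * (t - a))) (𝓝[>] 0) (𝓝 0) :=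
    ((continuous_mul_const _).tendsto' 0 0 (zero_mul _)).mono_left nhdsWithin_le_nhds
  exact ge_of_tendsto hlim (eventually_nhdsWithin_of_forall barrier)

theorem nonneg_of_mul_le_deriv_of_neg {x x' c : ℝ → ℝ} {a b : ℝ}
    (hx : ∀ t ∈ Ico a b, HasDerivAt x (x' t) t) (hc : ContinuousOn c (Ico a b))
    (hx' : ∀ t ∈ Ico a b, x t < 0 → c t * x t ≤ x' t) (ha : 0 ≤ x a) :
    ∀ t ∈ Ico a b, 0 ≤ x t := by
  intro t ht
  have hsub : Icc a t ⊆ Ico a b := Icc_subset_Ico_right ht.2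
  obtain ⟨K, hK⟩ := isCompact_Icc.bddAbove_image (hc.mono hsub)
  have key := nonpos_of_deriv_right_le_mul_of_pos (f := fun s => -x s) (f' := fun s => -x' s)
    (K := K) (HasDerivAt.continuousOn fun s hs => (hx s (hsub hs)).neg)
    (fun s hs => (hx s (hsub (Ico_subset_Icc_self hs))).neg.hasDerivWithinAt)
    (by simpa using ha) (fun s hs hpos => ?_) t (right_mem_Icc.2 ht.1)
  · simpa using key
  · have hcK : c s ≤ K := hK (mem_image_of_mem c (Ico_subset_Icc_self hs))
    have := hx' s (hsub (Ico_subset_Icc_self hs)) (by simpa using hpos)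
    nlinarith

theorem nonneg_of_deriv_nonneg_of_neg {x x' : ℝ → ℝ} {a b : ℝ}
    (hx : ∀ t ∈ Ico a b, HasDerivAt x (x' t) t) (hx' : ∀ t ∈ Ico a b, x t < 0 → 0 ≤ x' t)
    (ha : 0 ≤ x a) : ∀ t ∈ Ico a b, 0 ≤ x t :=
  nonneg_of_mul_le_deriv_of_neg (c := 0) hx continuousOn_const
    (fun t ht hneg => by simpa using hx' t ht hneg) ha

theorem le_of_hasDerivAt_mul_one_sub_div {x g : ℝ → ℝ} {a b q : ℝ} (hq : q ≠ 0)
    (hx : ∀ t ∈ Ico a b, HasDerivAt x (g t * (1 - x t / q)) t) (hg : ContinuousOn g (Ico a b))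
    (ha : x a ≤ q) : ∀ t ∈ Ico a b, x t ≤ q := by
  have hxc : ContinuousOn x (Ico a b) := HasDerivAt.continuousOn hx
  have := nonneg_of_mul_le_deriv_of_neg (x := fun t => q - x t) (c := fun t => -g t / q)
    (fun t ht => (hx t ht).const_sub q) (by fun_prop) (fun t _ _ => le_of_eq ?_) (by simpa using ha)
  · simpa using this
  · field_simp

theorem exists_le_of_deriv_le_mul_add {f f' : ℝ → ℝ} {a b K ε : ℝ}
    (hf : ∀ t ∈ Ico a b, HasDerivAt f (f' t) t) (bound : ∀ t ∈ Ico a b, f' t ≤ K * f t + ε) :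
    ∃ C, ∀ t ∈ Ico a b, f t ≤ C := by
  obtain ⟨C, hC⟩ := (isCompact_Icc : IsCompact (Icc a b)).bddAbove_image
    (f := fun t => gronwallBound (f a) K ε (t - a))
    (fun t _ => (hasDerivAt_gronwallBound_shift _ _ _ t a).continuousAt.continuousWithinAt)
  refine ⟨C, fun t ht => ?_⟩
  have hsub : Icc a t ⊆ Ico a b := Icc_subset_Ico_right ht.2
  calc f t ≤ gronwallBound (f a) K ε (t - a) :=
        le_gronwallBound_of_liminf_deriv_right_le (b := t)
          (HasDerivAt.continuousOn fun s hs => hf s (hsub hs))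
          (fun s hs _ hr =>
            (hf s (hsub (Ico_subset_Icc_self hs))).hasDerivWithinAt.liminf_right_slope_le hr)
          le_rfl (fun s hs => bound s (hsub (Ico_subset_Icc_self hs))) t (right_mem_Icc.2 ht.1)
    _ ≤ C := hC (mem_image_of_mem _ (Ico_subset_Icc_self ht))

theorem mem_Icc_of_hasDerivAt_cascade {x y k l : ℝ → ℝ} {a b : ℝ}
    (hk : ∀ t ∈ Ico a b, 0 ≤ k t) (hl : ∀ t ∈ Ico a b, 0 ≤ l t)
    (hx : ∀ t ∈ Ico a b, HasDerivAt x (-k t * x t) t)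
    (hy : ∀ t ∈ Ico a b, HasDerivAt y (k t * x t - l t * y t) t)
    (hxa : 0 ≤ x a) (hya : 0 ≤ y a) : ∀ t ∈ Ico a b, y t ∈ Icc 0 (x a + y a) := by
  have hx0 : ∀ t ∈ Ico a b, 0 ≤ x t := nonneg_of_deriv_nonneg_of_neg hx
    (fun t ht hneg => by nlinarith [hk t ht]) hxa
  have hy0 : ∀ t ∈ Ico a b, 0 ≤ y t := nonneg_of_deriv_nonneg_of_neg hy
    (fun t ht hneg => by nlinarith [hk t ht, hl t ht, hx0 t ht]) hya
  have hmass : ∀ t ∈ Ico a b, 0 ≤ x a + y a - (x t + y t) :=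
    nonneg_of_deriv_nonneg_of_neg (fun t ht => ((hx t ht).add (hy t ht)).const_sub _)
      (fun t ht _ => by nlinarith [hl t ht, hy0 t ht]) (by simp)
  exact fun t ht => ⟨hy0 t ht, by linarith [hx0 t ht, hmass t ht]⟩

theorem nonneg_of_hasDerivAt_growth_transfer {x y E g h : ℝ → ℝ} {a b γ δ : ℝ}
    (hE : ContinuousOn E (Ico a b)) (hg : ∀ t ∈ Ico a b, 0 ≤ g t) (hh : ∀ t ∈ Ico a b, 0 ≤ h t)
    (hx : ∀ t ∈ Ico a b, HasDerivAt x (γ * x t * E t + g t - h t * x t) t)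
    (hy : ∀ t ∈ Ico a b, HasDerivAt y (δ * y t * E t + h t * x t) t)
    (hxa : 0 ≤ x a) (hya : 0 ≤ y a) : ∀ t ∈ Ico a b, 0 ≤ x t ∧ 0 ≤ y t := by
  have hx0 : ∀ t ∈ Ico a b, 0 ≤ x t := nonneg_of_mul_le_deriv_of_neg (c := fun t => γ * E t) hx
    (by fun_prop) (fun t ht hneg => by nlinarith [hg t ht, hh t ht]) hxa
  have hy0 : ∀ t ∈ Ico a b, 0 ≤ y t := nonneg_of_mul_le_deriv_of_neg (c := fun t => δ * E t) hy
    (by fun_prop) (fun t ht _ => by nlinarith [hh t ht, hx0 t ht]) hya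
  exact fun t ht => ⟨hx0 t ht, hy0 t ht⟩

theorem exists_add_le_of_hasDerivAt_growth_transfer {x y E g h : ℝ → ℝ} {a b γ δ c G : ℝ}
    (hγ : 0 ≤ γ) (hδ : 0 ≤ δ) (hc : 0 ≤ c)
    (hx : ∀ t ∈ Ico a b, HasDerivAt x (γ * x t * E t + g t - h t * x t) t)
    (hy : ∀ t ∈ Ico a b, HasDerivAt y (δ * y t * E t + h t * x t) t)
    (hx0 : ∀ t ∈ Ico a b, 0 ≤ x t) (hy0 : ∀ t ∈ Ico a b, 0 ≤ y t)
    (hE : ∀ t ∈ Ico a b, E t ≤ c) (hg : ∀ t ∈ Ico a b, g t ≤ G) :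
    ∃ C, ∀ t ∈ Ico a b, x t + y t ≤ C :=
  exists_le_of_deriv_le_mul_add (K := (γ + δ) * c) (ε := G) (fun t ht => (hx t ht).add (hy t ht))
    fun t ht => by
      have hxE : γ * x t * E t ≤ γ * x t * c :=
        mul_le_mul_of_nonneg_left (hE t ht) (mul_nonneg hγ (hx0 t ht))
      have hyE : δ * y t * E t ≤ δ * y t * c :=
        mul_le_mul_of_nonneg_left (hE t ht) (mul_nonneg hδ (hy0 t ht))
      nlinarith [hg t ht, mul_nonneg (mul_nonneg hδ hc) (hx0 t ht),
        mul_nonneg (mul_nonneg hγ hc) (hy0 t ht)]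

theorem stmt6_general
    (T : ℝ)
    (γ2 γ3 τC τA1 τA1C τA2 τA2C α1 α2 α3 αb2 αb3 : ℝ)
    (hγ2 : 0 < γ2) (hγ3 : 0 < γ3) (hτC : 0 < τC) (hτA1 : 0 < τA1)
    (hτA1C : 0 < τA1C) (hτA2 : 0 < τA2) (hτA2C : 0 < τA2C)
    (f0 : ℝ → ℝ → ℝ) (f1 : ℝ → ℝ) (f2 : ℝ → ℝ → ℝ)
    (m0 M0 m1 M1 m2 M2 : ℝ) (hm0 : 0 < m0) (hm1 : 0 < m1) (hm2 : 0 < m2)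
    (hf0bd : ∀ x y, m0 ≤ f0 x y ∧ f0 x y ≤ M0)
    (hf1bd : ∀ x, m1 ≤ f1 x ∧ f1 x ≤ M1)
    (hf2bd : ∀ x y, m2 ≤ f2 x y ∧ f2 x y ≤ M2)
    (Q0 Q1 Q2 Q3 A1 A2 : ℝ → ℝ)
    (hQ0' : ∀ t ∈ Set.Ico 0 T, HasDerivAt Q0 (-(f0 (Q2 t) (Q3 t)) * Q0 t) t)
    (hQ1' : ∀ t ∈ Set.Ico 0 T, HasDerivAt Q1 (f0 (Q2 t) (Q3 t) * Q0 t - f1 (A1 t) * Q1 t) t)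
    (hQ2' : ∀ t ∈ Set.Ico 0 T, HasDerivAt Q2
      (γ2 * Q2 t * (1 - (Q2 t + Q3 t) / τC + A1 t / τA1C + A2 t / τA2C)
        + f1 (A1 t) * Q1 t - f2 (A1 t) (A2 t) * Q2 t) t)
    (hQ3' : ∀ t ∈ Set.Ico 0 T, HasDerivAt Q3
      (γ3 * Q3 t * (1 - (Q2 t + Q3 t) / τC + A1 t / τA1C + A2 t / τA2C)
        + f2 (A1 t) (A2 t) * Q2 t) t)
    (hA1' : ∀ t ∈ Set.Ico 0 T, HasDerivAt A1
      ((α1 * Q1 t + α2 * Q2 t - α3 * Q3 t) * (1 + A1 t / τA1) * (1 - A1 t / τA1)) t)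
    (hA2' : ∀ t ∈ Set.Ico 0 T, HasDerivAt A2
      ((αb2 * Q2 t + αb3 * Q3 t) * A2 t * (1 - A2 t / τA2)) t)
    (hQ0i : 0 ≤ Q0 0) (hQ1i : 0 ≤ Q1 0) (hQ2i : 0 ≤ Q2 0) (hQ3i : 0 ≤ Q3 0)
    (hA1i : A1 0 ∈ Set.Icc (-τA1) τA1) (hA2i : A2 0 ∈ Set.Icc 0 τA2) :
    ∃ C2 C3 : ℝ, 0 < C2 ∧ 0 < C3 ∧
      ∀ t ∈ Set.Ico 0 T, Q2 t ≤ C2 ∧ Q3 t ≤ C3 := by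
  have hM1 : 0 ≤ M1 := hm1.le.trans ((hf1bd 0).1.trans (hf1bd 0).2)
  have hQ1c := HasDerivAt.continuousOn hQ1'
  have hQ2c := HasDerivAt.continuousOn hQ2'
  have hQ3c := HasDerivAt.continuousOn hQ3'
  have hA1c := HasDerivAt.continuousOn hA1'
  have hA2c := HasDerivAt.continuousOn hA2'
  have hA1 := le_of_hasDerivAt_mul_one_sub_div hτA1.ne' hA1' (by fun_prop) hA1i.2
  have hA2 := le_of_hasDerivAt_mul_one_sub_div hτA2.ne' hA2' (by fun_prop) hA2i.2
  have hQ1 := mem_Icc_of_hasDerivAt_cascade (k := fun t => f0 (Q2 t) (Q3 t))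
    (fun t _ => hm0.le.trans (hf0bd _ _).1) (fun t _ => hm1.le.trans (hf1bd _).1)
    hQ0' hQ1' hQ0i hQ1i
  have hQ23 := nonneg_of_hasDerivAt_growth_transfer (h := fun t => f2 (A1 t) (A2 t)) (by fun_prop)
    (fun t ht => mul_nonneg (hm1.le.trans (hf1bd _).1) (hQ1 t ht).1)
    (fun t _ => hm2.le.trans (hf2bd _ _).1) hQ2' hQ3' hQ2i hQ3i
  obtain ⟨C, hC⟩ := exists_add_le_of_hasDerivAt_growth_transfer
    (c := 1 + τA1 / τA1C + τA2 / τA2C) (G := M1 * (Q0 0 + Q1 0)) hγ2.le hγ3.le (by positivity)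
    hQ2' hQ3' (fun t ht => (hQ23 t ht).1) (fun t ht => (hQ23 t ht).2)
    (fun t ht => by
      have : A1 t / τA1C ≤ τA1 / τA1C := by gcongr; exact hA1 t ht
      have : A2 t / τA2C ≤ τA2 / τA2C := by gcongr; exact hA2 t ht
      have : 0 ≤ (Q2 t + Q3 t) / τC := div_nonneg (by linarith [hQ23 t ht]) hτC.le
      linarith)
    (fun t ht => mul_le_mul (hf1bd _).2 (hQ1 t ht).2 (hQ1 t ht).1 hM1)
  refine ⟨max C 1, max C 1, by positivity, by positivity, fun t ht => ?_⟩
  obtain ⟨h2, h3⟩ := hQ23 t ht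
  have := le_max_left C 1
  constructor <;> linarith [hC t ht]

theorem stmt6
    (T : ℝ) (hT : 0 < T)
    (γ2 γ3 τC τA1 τA1C τA2 τA2C α1 α2 α3 αb2 αb3 : ℝ)
    (hγ2 : 0 < γ2) (hγ3 : 0 < γ3) (hτC : 0 < τC) (hτA1 : 0 < τA1)
    (hτA1C : 0 < τA1C) (hτA2 : 0 < τA2) (hτA2C : 0 < τA2C)
    (hα1 : 0 < α1) (hα2 : 0 < α2) (hα3 : 0 < α3) (hαb2 : 0 < αb2) (hαb3 : 0 < αb3)
    (f0 : ℝ → ℝ → ℝ) (f1 : ℝ → ℝ) (f2 : ℝ → ℝ → ℝ)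
    (K0 K1 K2 : NNReal)
    (hf0lip : LipschitzWith K0 (fun p : ℝ × ℝ => f0 p.1 p.2))
    (hf1lip : LipschitzWith K1 f1)
    (hf2lip : LipschitzWith K2 (fun p : ℝ × ℝ => f2 p.1 p.2))
    (m0 M0 m1 M1 m2 M2 : ℝ) (hm0 : 0 < m0) (hm1 : 0 < m1) (hm2 : 0 < m2)
    (hf0bd : ∀ x y, m0 ≤ f0 x y ∧ f0 x y ≤ M0)
    (hf1bd : ∀ x, m1 ≤ f1 x ∧ f1 x ≤ M1)
    (hf2bd : ∀ x y, m2 ≤ f2 x y ∧ f2 x y ≤ M2)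
    (Q0 Q1 Q2 Q3 A1 A2 : ℝ → ℝ)
    (hQ0' : ∀ t ∈ Set.Ico 0 T, HasDerivAt Q0 (-(f0 (Q2 t) (Q3 t)) * Q0 t) t)
    (hQ1' : ∀ t ∈ Set.Ico 0 T, HasDerivAt Q1 (f0 (Q2 t) (Q3 t) * Q0 t - f1 (A1 t) * Q1 t) t)
    (hQ2' : ∀ t ∈ Set.Ico 0 T, HasDerivAt Q2
      (γ2 * Q2 t * (1 - (Q2 t + Q3 t) / τC + A1 t / τA1C + A2 t / τA2C)
        + f1 (A1 t) * Q1 t - f2 (A1 t) (A2 t) * Q2 t) t)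
    (hQ3' : ∀ t ∈ Set.Ico 0 T, HasDerivAt Q3
      (γ3 * Q3 t * (1 - (Q2 t + Q3 t) / τC + A1 t / τA1C + A2 t / τA2C)
        + f2 (A1 t) (A2 t) * Q2 t) t)
    (hA1' : ∀ t ∈ Set.Ico 0 T, HasDerivAt A1
      ((α1 * Q1 t + α2 * Q2 t - α3 * Q3 t) * (1 + A1 t / τA1) * (1 - A1 t / τA1)) t)
    (hA2' : ∀ t ∈ Set.Ico 0 T, HasDerivAt A2
      ((αb2 * Q2 t + αb3 * Q3 t) * A2 t * (1 - A2 t / τA2)) t)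
    (hQ0i : 0 ≤ Q0 0) (hQ1i : 0 ≤ Q1 0) (hQ2i : 0 ≤ Q2 0) (hQ3i : 0 ≤ Q3 0)
    (hA1i : A1 0 ∈ Set.Icc (-τA1) τA1) (hA2i : A2 0 ∈ Set.Icc 0 τA2) :
    ∃ C2 C3 : ℝ, 0 < C2 ∧ 0 < C3 ∧
      ∀ t ∈ Set.Ico 0 T, Q2 t ≤ C2 ∧ Q3 t ≤ C3 :=
  stmt6_general T γ2 γ3 τC τA1 τA1C τA2 τA2C α1 α2 α3 αb2 αb3 hγ2 hγ3 hτC hτA1 hτA1C hτA2 hτA2C f0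
    f1 f2 m0 M0 m1 M1 m2 M2 hm0 hm1 hm2 hf0bd hf1bd hf2bd Q0 Q1 Q2 Q3 A1 A2 hQ0' hQ1' hQ2' hQ3' hA1'
    hA2' hQ0i hQ1i hQ2i hQ3i hA1i hA2i
end

section
/- Let (Q0, Q1, Q2, Q3, A1, A2) be a solution of system (S) on [0, ∞) with initial data Q0(0) > 0, Q1(0) = Q2(0) = Q3(0) = 0, A1(0) ∈ (-τ_{A1}, τ_{A1}), A2(0) ∈ (0, τ_{A2}), and assume τ_{A1} < τ_{A1}^C. Then there exist a time t* > 0 and constants 0 < c_y < C_y such that for all t > t*, c_y ≤ Q2(t) + Q3(t) ≤ C_y. -/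
/-!
Each compartment obeys a linear differential inequality `x' ≥ a(t) x` with `a` continuous, so
`x(t) exp (-∫₀ᵗ a)` is nondecreasing: this gives `Q0 > 0`, `Q1, Q2 > 0` for `t > 0`, `Q3 ≥ 0`, and
keeps `A1` in `(-τ_{A1}, τ_{A1})` and `A2` in `(0, τ_{A2})`, the intervals between the equilibria of
their logistic factors. Since `(Q0 + Q1)' = -f1 Q1 ≤ 0`, also `Q1 ≤ Q0(0)`.

For `y = Q2 + Q3` one has `y' = (γ2 Q2 + γ3 Q3) G + f1(A1) Q1` with growth factor
`G = 1 - y/τ_C + A1/τ_{A1}^C + A2/τ_{A2}^C`, and the bounds on `A1, A2` give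
`δ - y/τ_C ≤ G ≤ Γ - y/τ_C` with `δ = 1 - τ_{A1}/τ_{A1}^C > 0` and a constant `Γ`. So `y' < 0`
at every large level of `y` and `y' > 0` at every small positive level, and once `y` is positive
it cannot cross either barrier.
-/

open Set Real

section LinearComparison

variable {a x d F : ℝ → ℝ}

theorem monotoneOn_Ici_of_hasDerivAt_nonneg {f f' : ℝ → ℝ} {t₀ : ℝ}
    (hf : ∀ t ∈ Ici t₀, HasDerivAt f (f' t) t) (hf' : ∀ t ∈ Ioi t₀, 0 ≤ f' t) :
    MonotoneOn f (Ici t₀) :=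
  monotoneOn_of_hasDerivWithinAt_nonneg (convex_Ici t₀) (HasDerivAt.continuousOn hf)
    (fun t ht => (hf t (interior_subset ht)).hasDerivWithinAt) (by rwa [interior_Ici])

theorem strictMonoOn_Ici_of_hasDerivAt_pos {f f' : ℝ → ℝ} {t₀ : ℝ}
    (hf : ∀ t ∈ Ici t₀, HasDerivAt f (f' t) t) (hf' : ∀ t ∈ Ioi t₀, 0 < f' t) :
    StrictMonoOn f (Ici t₀) :=
  strictMonoOn_of_hasDerivWithinAt_pos (convex_Ici t₀) (HasDerivAt.continuousOn hf)
    (fun t ht => (hf t (interior_subset ht)).hasDerivWithinAt) (by rwa [interior_Ici])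

theorem exists_hasDerivAt_eq_of_continuousOn_Ici (ha : ContinuousOn a (Ici 0)) :
    ∃ F : ℝ → ℝ, F 0 = 0 ∧ ∀ t ∈ Ici (0 : ℝ), HasDerivAt F (a t) t := by
  -- `a` is only continuous on `[0, ∞)`; extend it to the left by the constant `a 0`
  have hc : Continuous fun s => a (max s 0) :=
    ha.comp_continuous (continuous_id.max continuous_const) fun s => le_max_right s 0
  refine ⟨fun t => ∫ s in (0 : ℝ)..t, a (max s 0), by simp, fun t ht => ?_⟩
  simpa [max_eq_left (mem_Ici.1 ht)] using (hc.integral_hasStrictDerivAt 0 t).hasDerivAt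

theorem hasDerivAt_mul_exp_neg (hF : ∀ t ∈ Ici (0 : ℝ), HasDerivAt F (a t) t)
    (hx : ∀ t ∈ Ici (0 : ℝ), HasDerivAt x (d t) t) :
    ∀ t ∈ Ici (0 : ℝ), HasDerivAt (fun s => x s * exp (-F s)) ((d t - a t * x t) * exp (-F t)) t :=
  fun t ht => ((hx t ht).mul (hF t ht).neg.exp).congr_deriv (by simp only [Pi.neg_apply]; ring)

theorem exists_mul_exp_le_of_mul_le_deriv (ha : ContinuousOn a (Ici 0))
    (hx : ∀ t ∈ Ici (0 : ℝ), HasDerivAt x (d t) t) (hd : ∀ t ∈ Ioi (0 : ℝ), a t * x t ≤ d t) :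
    ∃ F : ℝ → ℝ, ∀ t ∈ Ici (0 : ℝ), x 0 * exp (F t) ≤ x t := by
  obtain ⟨F, hF0, hF⟩ := exists_hasDerivAt_eq_of_continuousOn_Ici ha
  have hmono := monotoneOn_Ici_of_hasDerivAt_nonneg (hasDerivAt_mul_exp_neg hF hx)
    fun t ht => mul_nonneg (sub_nonneg.2 (hd t ht)) (exp_pos _).le
  refine ⟨F, fun t ht => ?_⟩
  have := hmono self_mem_Ici ht ht
  simp only [hF0, neg_zero, exp_zero, mul_one] at this
  rwa [← le_div_iff₀ (exp_pos _), div_eq_mul_inv, ← exp_neg]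

theorem exists_mul_exp_lt_of_mul_lt_deriv (ha : ContinuousOn a (Ici 0))
    (hx : ∀ t ∈ Ici (0 : ℝ), HasDerivAt x (d t) t) (hd : ∀ t ∈ Ioi (0 : ℝ), a t * x t < d t) :
    ∃ F : ℝ → ℝ, ∀ t ∈ Ioi (0 : ℝ), x 0 * exp (F t) < x t := by
  obtain ⟨F, hF0, hF⟩ := exists_hasDerivAt_eq_of_continuousOn_Ici ha
  have hmono := strictMonoOn_Ici_of_hasDerivAt_pos (hasDerivAt_mul_exp_neg hF hx)
    fun t ht => mul_pos (sub_pos.2 (hd t ht)) (exp_pos _)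
  refine ⟨F, fun t ht => ?_⟩
  have := hmono self_mem_Ici (mem_Ici_of_Ioi ht) ht
  simp only [hF0, neg_zero, exp_zero, mul_one] at this
  rwa [← lt_div_iff₀ (exp_pos _), div_eq_mul_inv, ← exp_neg]

theorem nonneg_of_mul_le_deriv (ha : ContinuousOn a (Ici 0))
    (hx : ∀ t ∈ Ici (0 : ℝ), HasDerivAt x (d t) t) (hd : ∀ t ∈ Ioi (0 : ℝ), a t * x t ≤ d t)
    (h0 : 0 ≤ x 0) : ∀ t ∈ Ici (0 : ℝ), 0 ≤ x t := by
  obtain ⟨F, hF⟩ := exists_mul_exp_le_of_mul_le_deriv ha hx hd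
  exact fun t ht => (mul_nonneg h0 (exp_pos _).le).trans (hF t ht)

theorem pos_of_mul_le_deriv (ha : ContinuousOn a (Ici 0))
    (hx : ∀ t ∈ Ici (0 : ℝ), HasDerivAt x (d t) t) (hd : ∀ t ∈ Ioi (0 : ℝ), a t * x t ≤ d t)
    (h0 : 0 < x 0) : ∀ t ∈ Ici (0 : ℝ), 0 < x t := by
  obtain ⟨F, hF⟩ := exists_mul_exp_le_of_mul_le_deriv ha hx hd
  exact fun t ht => (mul_pos h0 (exp_pos _)).trans_le (hF t ht)

theorem pos_of_mul_lt_deriv (ha : ContinuousOn a (Ici 0))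
    (hx : ∀ t ∈ Ici (0 : ℝ), HasDerivAt x (d t) t) (hd : ∀ t ∈ Ioi (0 : ℝ), a t * x t < d t)
    (h0 : 0 ≤ x 0) : ∀ t ∈ Ioi (0 : ℝ), 0 < x t := by
  obtain ⟨F, hF⟩ := exists_mul_exp_lt_of_mul_lt_deriv ha hx hd
  exact fun t ht => (mul_nonneg h0 (exp_pos _).le).trans_lt (hF t ht)

end LinearComparison

section Barrier

variable {y d : ℝ → ℝ} {t₀ c : ℝ}

theorem le_of_deriv_neg_of_eq (hy : ∀ t ∈ Ici t₀, HasDerivAt y (d t) t) (h₀ : y t₀ ≤ c)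
    (hd : ∀ t ∈ Ici t₀, y t = c → d t < 0) : ∀ t ∈ Ici t₀, y t ≤ c := fun _ ht =>
  image_le_of_deriv_right_lt_deriv_boundary' (HasDerivAt.continuousOn fun s hs => hy s hs.1)
    (fun s hs => (hy s hs.1).hasDerivWithinAt) h₀ continuousOn_const
    (fun _ _ => hasDerivWithinAt_const _ _ c) (fun s hs => hd s hs.1) ⟨ht, le_rfl⟩

theorem ge_of_deriv_pos_of_eq (hy : ∀ t ∈ Ici t₀, HasDerivAt y (d t) t) (h₀ : c ≤ y t₀)
    (hd : ∀ t ∈ Ici t₀, y t = c → 0 < d t) : ∀ t ∈ Ici t₀, c ≤ y t := fun _ ht =>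
  image_le_of_deriv_right_lt_deriv_boundary' continuousOn_const
    (fun _ _ => hasDerivWithinAt_const _ _ c) h₀ (HasDerivAt.continuousOn fun s hs => hy s hs.1)
    (fun s hs => (hy s hs.1).hasDerivWithinAt) (fun s hs h => hd s hs.1 h.symm) ⟨ht, le_rfl⟩

end Barrier

section Compartments

theorem mem_Ioo_of_hasDerivAt_mul_sub_mul_sub {x b : ℝ → ℝ} {l u : ℝ}
    (hb : ContinuousOn b (Ici 0))
    (hx : ∀ t ∈ Ici (0 : ℝ), HasDerivAt x (b t * (x t - l) * (u - x t)) t)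
    (h0 : x 0 ∈ Ioo l u) : ∀ t ∈ Ici (0 : ℝ), x t ∈ Ioo l u := by
  have hxc : ContinuousOn x (Ici 0) := HasDerivAt.continuousOn hx
  have hl := pos_of_mul_le_deriv (a := fun t => b t * (u - x t)) (by fun_prop)
    (fun t ht => (hx t ht).sub_const l) (fun _ _ => le_of_eq (by ring)) (sub_pos.2 h0.1)
  have hu := pos_of_mul_le_deriv (a := fun t => -(b t * (x t - l))) (by fun_prop)
    (fun t ht => (hx t ht).const_sub u) (fun _ _ => le_of_eq (by ring)) (sub_pos.2 h0.2)
  exact fun t ht => ⟨sub_pos.1 (hl t ht), sub_pos.1 (hu t ht)⟩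

theorem pos_and_le_of_hasDerivAt_chain {Q0 Q1 k l : ℝ → ℝ}
    (hk : ContinuousOn k (Ici 0)) (hl : ContinuousOn l (Ici 0))
    (hk0 : ∀ t ∈ Ioi (0 : ℝ), 0 < k t) (hl0 : ∀ t ∈ Ioi (0 : ℝ), 0 ≤ l t)
    (hQ0 : ∀ t ∈ Ici (0 : ℝ), HasDerivAt Q0 (-k t * Q0 t) t)
    (hQ1 : ∀ t ∈ Ici (0 : ℝ), HasDerivAt Q1 (k t * Q0 t - l t * Q1 t) t)
    (hQ0i : 0 < Q0 0) (hQ1i : Q1 0 = 0) :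
    (∀ t ∈ Ioi (0 : ℝ), 0 < Q1 t) ∧ ∀ t ∈ Ici (0 : ℝ), Q1 t ≤ Q0 0 := by
  have hQ0pos := pos_of_mul_le_deriv (a := fun t => -k t) (by fun_prop) hQ0 (fun _ _ => le_rfl) hQ0i
  have hQ1pos := pos_of_mul_lt_deriv (a := fun t => -l t) (by fun_prop) hQ1
    (fun t ht => by nlinarith [hk0 t ht, hQ0pos t (mem_Ici_of_Ioi ht)]) hQ1i.ge
  have htotal := monotoneOn_Ici_of_hasDerivAt_nonneg (f := fun s => -(Q0 s + Q1 s))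
    (fun t ht => ((hQ0 t ht).add (hQ1 t ht)).neg)
    fun t ht => by nlinarith [hl0 t ht, hQ1pos t ht]
  refine ⟨hQ1pos, fun t ht => ?_⟩
  have := htotal self_mem_Ici ht ht
  linarith [hQ0pos t ht]

theorem pos_and_nonneg_of_hasDerivAt_growth {Q2 Q3 G r s : ℝ → ℝ} {γ2 γ3 : ℝ}
    (hG : ContinuousOn G (Ici 0)) (hr : ContinuousOn r (Ici 0))
    (hr0 : ∀ t ∈ Ioi (0 : ℝ), 0 ≤ r t) (hs : ∀ t ∈ Ioi (0 : ℝ), 0 < s t)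
    (hQ2 : ∀ t ∈ Ici (0 : ℝ), HasDerivAt Q2 (γ2 * Q2 t * G t + s t - r t * Q2 t) t)
    (hQ3 : ∀ t ∈ Ici (0 : ℝ), HasDerivAt Q3 (γ3 * Q3 t * G t + r t * Q2 t) t)
    (hQ2i : 0 ≤ Q2 0) (hQ3i : 0 ≤ Q3 0) :
    (∀ t ∈ Ioi (0 : ℝ), 0 < Q2 t) ∧ ∀ t ∈ Ici (0 : ℝ), 0 ≤ Q2 t ∧ 0 ≤ Q3 t := by
  have hQ2lt : ∀ t ∈ Ioi (0 : ℝ), (γ2 * G t - r t) * Q2 t < γ2 * Q2 t * G t + s t - r t * Q2 t :=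
    fun t ht => by nlinarith [hs t ht]
  have hQ2pos := pos_of_mul_lt_deriv (by fun_prop) hQ2 hQ2lt hQ2i
  have hQ2nn := nonneg_of_mul_le_deriv (by fun_prop) hQ2 (fun t ht => (hQ2lt t ht).le) hQ2i
  have hQ3nn := nonneg_of_mul_le_deriv (a := fun t => γ3 * G t) (by fun_prop) hQ3
    (fun t ht => by nlinarith [mul_nonneg (hr0 t ht) (hQ2pos t ht).le]) hQ3i
  exact ⟨hQ2pos, fun t ht => ⟨hQ2nn t ht, hQ3nn t ht⟩⟩

end Compartments

section Bounds

theorem growthFactor_mem_Icc {q a₁ a₂ τC τA1 τA1C τA2 τA2C : ℝ} (hτA1C : 0 < τA1C)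
    (hτA2C : 0 < τA2C) (ha₁ : a₁ ∈ Ioo (-τA1) τA1) (ha₂ : a₂ ∈ Ioo 0 τA2) :
    1 - q / τC + a₁ / τA1C + a₂ / τA2C ∈
      Icc (1 - τA1 / τA1C - q / τC) (1 + τA1 / τA1C + τA2 / τA2C - q / τC) := by
  have h₁ := div_lt_div_of_pos_right ha₁.1 hτA1C
  have h₂ := div_lt_div_of_pos_right ha₁.2 hτA1C
  have h₃ := div_pos ha₂.1 hτA2C
  have h₄ := div_lt_div_of_pos_right ha₂.2 hτA2C
  rw [neg_div] at h₁
  constructor <;> linarith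

theorem exists_le_of_deriv_le_sub_mul {y d : ℝ → ℝ} {t₀ κ R B : ℝ} (hκ : 0 < κ)
    (hy : ∀ t ∈ Ici t₀, HasDerivAt y (d t) t)
    (hd : ∀ t ∈ Ici t₀, R ≤ y t → d t ≤ B - κ * y t) : ∃ C, ∀ t ∈ Ici t₀, y t ≤ C := by
  set C := max (max (y t₀) R) (B / κ) + 1 with hC
  have hy₀ : y t₀ ≤ C := by linarith [le_max_left (max (y t₀) R) (B / κ), le_max_left (y t₀) R]
  have hRC : R ≤ C := by linarith [le_max_left (max (y t₀) R) (B / κ), le_max_right (y t₀) R]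
  have hBC : B < κ * C := by
    rw [← div_lt_iff₀' hκ]
    linarith [le_max_right (max (y t₀) R) (B / κ)]
  refine ⟨C, le_of_deriv_neg_of_eq hy hy₀ fun t ht hyt => ?_⟩
  have := hd t ht (hyt ▸ hRC)
  rw [hyt] at this
  linarith

theorem exists_bounds_of_hasDerivAt_mul_add {y w G s : ℝ → ℝ} {γ δ Γ τ S t₁ : ℝ}
    (hγ : 0 < γ) (hδ : 0 < δ) (hτ : 0 < τ)
    (hy : ∀ t ∈ Ici (0 : ℝ), HasDerivAt y (w t * G t + s t) t)
    (hw : ∀ t ∈ Ici (0 : ℝ), 0 ≤ w t ∧ γ * y t ≤ w t)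
    (hG : ∀ t ∈ Ici (0 : ℝ), G t ∈ Icc (δ - y t / τ) (Γ - y t / τ))
    (hs : ∀ t ∈ Ici (0 : ℝ), s t ≤ S) (hs₀ : ∀ t ∈ Ioi (0 : ℝ), 0 ≤ s t)
    (ht₁ : 0 < t₁) (hy₁ : 0 < y t₁) :
    ∃ tstar > (0 : ℝ), ∃ cy Cy : ℝ, 0 < cy ∧ cy < Cy ∧
      ∀ t > tstar, cy ≤ y t ∧ y t ≤ Cy := by
  obtain ⟨Cy, hCy⟩ := exists_le_of_deriv_le_sub_mul (R := (Γ + 1) * τ) (B := S) hγ hy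
    fun t ht hR => by
      have hG1 : G t ≤ -1 := by
        have : Γ + 1 ≤ y t / τ := by rwa [le_div_iff₀ hτ]
        linarith [(hG t ht).2]
      nlinarith [hw t ht, hs t ht]
  set cy := min (y t₁) (δ * τ) / 2 with hcy_def
  have hcy : 0 < cy := by positivity
  have hcy₁ : cy < y t₁ := by rw [hcy_def]; linarith [min_le_left (y t₁) (δ * τ)]
  have hcyδ : cy < δ * τ := by rw [hcy_def]; linarith [min_le_right (y t₁) (δ * τ), mul_pos hδ hτ]
  have hlow := ge_of_deriv_pos_of_eq (c := cy) (fun t ht => hy t (ht₁.le.trans ht)) hcy₁.le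
    fun t ht hyt => by
      have ht' : t ∈ Ioi (0 : ℝ) := ht₁.trans_le ht
      have hGpos : 0 < G t := by
        have : y t / τ < δ := by rwa [hyt, div_lt_iff₀ hτ]
        linarith [(hG t (mem_Ici_of_Ioi ht')).1]
      have hwpos : 0 < w t := by nlinarith [(hw t (mem_Ici_of_Ioi ht')).2]
      nlinarith [hs₀ t ht', mul_pos hwpos hGpos]
  exact ⟨t₁, ht₁, cy, Cy, hcy, hcy₁.trans_le (hCy t₁ ht₁.le),
    fun t ht => ⟨hlow t ht.le, hCy t (ht₁.le.trans ht.le)⟩⟩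

end Bounds

theorem stmt7_general
    (γ2 γ3 τC τA1 τA1C τA2 τA2C α1 α2 α3 αb2 αb3 : ℝ)
    (hγ2 : 0 < γ2) (hγ3 : 0 < γ3) (hτC : 0 < τC) (hτA1 : 0 < τA1)
    (hτA1C : 0 < τA1C) (hτA2 : 0 < τA2) (hτA2C : 0 < τA2C)
    (f0 : ℝ → ℝ → ℝ) (f1 : ℝ → ℝ) (f2 : ℝ → ℝ → ℝ)
    (K0 K1 K2 : NNReal)
    (hf0lip : LipschitzWith K0 (fun p : ℝ × ℝ => f0 p.1 p.2))
    (hf1lip : LipschitzWith K1 f1)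
    (hf2lip : LipschitzWith K2 (fun p : ℝ × ℝ => f2 p.1 p.2))
    (m0 M0 m1 M1 m2 M2 : ℝ) (hm0 : 0 < m0) (hm1 : 0 < m1) (hm2 : 0 < m2)
    (hf0bd : ∀ x y, m0 ≤ f0 x y ∧ f0 x y ≤ M0)
    (hf1bd : ∀ x, m1 ≤ f1 x ∧ f1 x ≤ M1)
    (hf2bd : ∀ x y, m2 ≤ f2 x y ∧ f2 x y ≤ M2)
    (Q0 Q1 Q2 Q3 A1 A2 : ℝ → ℝ)
    (hQ0' : ∀ t ∈ Set.Ici (0:ℝ), HasDerivAt Q0 (-(f0 (Q2 t) (Q3 t)) * Q0 t) t)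
    (hQ1' : ∀ t ∈ Set.Ici (0:ℝ), HasDerivAt Q1 (f0 (Q2 t) (Q3 t) * Q0 t - f1 (A1 t) * Q1 t) t)
    (hQ2' : ∀ t ∈ Set.Ici (0:ℝ), HasDerivAt Q2
      (γ2 * Q2 t * (1 - (Q2 t + Q3 t) / τC + A1 t / τA1C + A2 t / τA2C)
        + f1 (A1 t) * Q1 t - f2 (A1 t) (A2 t) * Q2 t) t)
    (hQ3' : ∀ t ∈ Set.Ici (0:ℝ), HasDerivAt Q3
      (γ3 * Q3 t * (1 - (Q2 t + Q3 t) / τC + A1 t / τA1C + A2 t / τA2C)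
        + f2 (A1 t) (A2 t) * Q2 t) t)
    (hA1' : ∀ t ∈ Set.Ici (0:ℝ), HasDerivAt A1
      ((α1 * Q1 t + α2 * Q2 t - α3 * Q3 t) * (1 + A1 t / τA1) * (1 - A1 t / τA1)) t)
    (hA2' : ∀ t ∈ Set.Ici (0:ℝ), HasDerivAt A2
      ((αb2 * Q2 t + αb3 * Q3 t) * A2 t * (1 - A2 t / τA2)) t)
    (hQ0i : 0 < Q0 0) (hQ1i : Q1 0 = 0) (hQ2i : Q2 0 = 0) (hQ3i : Q3 0 = 0)
    (hA1i : A1 0 ∈ Set.Ioo (-τA1) τA1) (hA2i : A2 0 ∈ Set.Ioo 0 τA2)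
    (hττ : τA1 < τA1C) :
    ∃ tstar > (0:ℝ), ∃ cy Cy : ℝ, 0 < cy ∧ cy < Cy ∧
      ∀ t > tstar, cy ≤ Q2 t + Q3 t ∧ Q2 t + Q3 t ≤ Cy := by
  have hQ1c := HasDerivAt.continuousOn hQ1'
  have hQ2c := HasDerivAt.continuousOn hQ2'
  have hQ3c := HasDerivAt.continuousOn hQ3'
  have hA1c := HasDerivAt.continuousOn hA1'
  have hA2c := HasDerivAt.continuousOn hA2'
  have hf1 : ∀ t, 0 < f1 t := fun t => hm1.trans_le (hf1bd t).1
  obtain ⟨hQ1pos, hQ1le⟩ := pos_and_le_of_hasDerivAt_chain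
    (hf0lip.continuous.comp_continuousOn (hQ2c.prodMk hQ3c))
    (hf1lip.continuous.comp_continuousOn hA1c)
    (fun t _ => hm0.trans_le (hf0bd _ _).1) (fun t _ => (hf1 _).le) hQ0' hQ1' hQ0i hQ1i
  obtain ⟨hQ2pos, hQ23⟩ := pos_and_nonneg_of_hasDerivAt_growth
    (G := fun t => 1 - (Q2 t + Q3 t) / τC + A1 t / τA1C + A2 t / τA2C) (by fun_prop)
    (hf2lip.continuous.comp_continuousOn (hA1c.prodMk hA2c)) (fun t _ => hm2.le.trans (hf2bd _ _).1)
    (fun t ht => mul_pos (hf1 _) (hQ1pos t ht)) hQ2' hQ3' hQ2i.ge hQ3i.ge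
  have hA1 := mem_Ioo_of_hasDerivAt_mul_sub_mul_sub
    (b := fun t => (α1 * Q1 t + α2 * Q2 t - α3 * Q3 t) / τA1 ^ 2) (by fun_prop)
    (fun t ht => (hA1' t ht).congr_deriv (by field_simp; ring)) hA1i
  have hA2 := mem_Ioo_of_hasDerivAt_mul_sub_mul_sub
    (b := fun t => (αb2 * Q2 t + αb3 * Q3 t) / τA2) (by fun_prop)
    (fun t ht => (hA2' t ht).congr_deriv (by field_simp; ring)) hA2i
  refine exists_bounds_of_hasDerivAt_mul_add (y := fun t => Q2 t + Q3 t)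
    (w := fun t => γ2 * Q2 t + γ3 * Q3 t)
    (G := fun t => 1 - (Q2 t + Q3 t) / τC + A1 t / τA1C + A2 t / τA2C)
    (s := fun t => f1 (A1 t) * Q1 t) (γ := min γ2 γ3) (δ := 1 - τA1 / τA1C)
    (Γ := 1 + τA1 / τA1C + τA2 / τA2C) (S := M1 * Q0 0) (lt_min hγ2 hγ3)
    (sub_pos.2 ((div_lt_one hτA1C).2 hττ)) hτC
    (fun t ht => ((hQ2' t ht).add (hQ3' t ht)).congr_deriv (by ring)) (fun t ht => ?_)
    (fun t ht => growthFactor_mem_Icc hτA1C hτA2C (hA1 t ht) (hA2 t ht)) (fun t ht => ?_)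
    (fun t ht => (mul_pos (hf1 _) (hQ1pos t ht)).le) one_pos
    (add_pos_of_pos_of_nonneg (hQ2pos 1 (mem_Ioi.2 one_pos)) (hQ23 1 (mem_Ici.2 zero_le_one)).2)
  · obtain ⟨h2, h3⟩ := hQ23 t ht
    exact ⟨by positivity, by nlinarith [min_le_left γ2 γ3, min_le_right γ2 γ3]⟩
  · exact (mul_le_mul_of_nonneg_left (hQ1le t ht) (hf1 _).le).trans
      (mul_le_mul_of_nonneg_right (hf1bd _).2 hQ0i.le)

theorem stmt7
    (γ2 γ3 τC τA1 τA1C τA2 τA2C α1 α2 α3 αb2 αb3 : ℝ)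
    (hγ2 : 0 < γ2) (hγ3 : 0 < γ3) (hτC : 0 < τC) (hτA1 : 0 < τA1)
    (hτA1C : 0 < τA1C) (hτA2 : 0 < τA2) (hτA2C : 0 < τA2C)
    (hα1 : 0 < α1) (hα2 : 0 < α2) (hα3 : 0 < α3) (hαb2 : 0 < αb2) (hαb3 : 0 < αb3)
    (f0 : ℝ → ℝ → ℝ) (f1 : ℝ → ℝ) (f2 : ℝ → ℝ → ℝ)
    (K0 K1 K2 : NNReal)
    (hf0lip : LipschitzWith K0 (fun p : ℝ × ℝ => f0 p.1 p.2))
    (hf1lip : LipschitzWith K1 f1)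
    (hf2lip : LipschitzWith K2 (fun p : ℝ × ℝ => f2 p.1 p.2))
    (m0 M0 m1 M1 m2 M2 : ℝ) (hm0 : 0 < m0) (hm1 : 0 < m1) (hm2 : 0 < m2)
    (hf0bd : ∀ x y, m0 ≤ f0 x y ∧ f0 x y ≤ M0)
    (hf1bd : ∀ x, m1 ≤ f1 x ∧ f1 x ≤ M1)
    (hf2bd : ∀ x y, m2 ≤ f2 x y ∧ f2 x y ≤ M2)
    (Q0 Q1 Q2 Q3 A1 A2 : ℝ → ℝ)
    (hQ0' : ∀ t ∈ Set.Ici (0:ℝ), HasDerivAt Q0 (-(f0 (Q2 t) (Q3 t)) * Q0 t) t)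
    (hQ1' : ∀ t ∈ Set.Ici (0:ℝ), HasDerivAt Q1 (f0 (Q2 t) (Q3 t) * Q0 t - f1 (A1 t) * Q1 t) t)
    (hQ2' : ∀ t ∈ Set.Ici (0:ℝ), HasDerivAt Q2
      (γ2 * Q2 t * (1 - (Q2 t + Q3 t) / τC + A1 t / τA1C + A2 t / τA2C)
        + f1 (A1 t) * Q1 t - f2 (A1 t) (A2 t) * Q2 t) t)
    (hQ3' : ∀ t ∈ Set.Ici (0:ℝ), HasDerivAt Q3
      (γ3 * Q3 t * (1 - (Q2 t + Q3 t) / τC + A1 t / τA1C + A2 t / τA2C)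
        + f2 (A1 t) (A2 t) * Q2 t) t)
    (hA1' : ∀ t ∈ Set.Ici (0:ℝ), HasDerivAt A1
      ((α1 * Q1 t + α2 * Q2 t - α3 * Q3 t) * (1 + A1 t / τA1) * (1 - A1 t / τA1)) t)
    (hA2' : ∀ t ∈ Set.Ici (0:ℝ), HasDerivAt A2
      ((αb2 * Q2 t + αb3 * Q3 t) * A2 t * (1 - A2 t / τA2)) t)
    (hQ0i : 0 < Q0 0) (hQ1i : Q1 0 = 0) (hQ2i : Q2 0 = 0) (hQ3i : Q3 0 = 0)
    (hA1i : A1 0 ∈ Set.Ioo (-τA1) τA1) (hA2i : A2 0 ∈ Set.Ioo 0 τA2)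
    (hττ : τA1 < τA1C) :
    ∃ tstar > (0:ℝ), ∃ cy Cy : ℝ, 0 < cy ∧ cy < Cy ∧
      ∀ t > tstar, cy ≤ Q2 t + Q3 t ∧ Q2 t + Q3 t ≤ Cy :=
  stmt7_general γ2 γ3 τC τA1 τA1C τA2 τA2C α1 α2 α3 αb2 αb3 hγ2 hγ3 hτC hτA1 hτA1C hτA2 hτA2C f0 f1
    f2 K0 K1 K2 hf0lip hf1lip hf2lip m0 M0 m1 M1 m2 M2 hm0 hm1 hm2 hf0bd hf1bd hf2bd Q0 Q1 Q2 Q3 A1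
    A2 hQ0' hQ1' hQ2' hQ3' hA1' hA2' hQ0i hQ1i hQ2i hQ3i hA1i hA2i hττ
end

section
/- Let (Q0, Q1, Q2, Q3, A1, A2) be a solution of system (S) on [0, ∞) with initial data Q0(0) > 0, Q1(0) = Q2(0) = Q3(0) = 0, A1(0) ∈ (-τ_{A1}, τ_{A1}), A2(0) ∈ (0, τ_{A2}), and assume τ_{A1} < τ_{A1}^C. Then A2 converges exponentially fast to τ_{A2}: there exist t* > 0, a constant C > 0 and a rate r > 0 such that for all t > t*, |A2(t) - τ_{A2}| ≤ C |A2(0) - τ_{A2}| e^{-r t}. -/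
/-!
Everything rests on a comparison principle: if `x' ≥ a x` with `a` bounded on compact intervals
and `x 0 ≥ 0`, then `x t ≥ x 0 * exp (-H t)`. Applied to `Q0`, to `τA1² - A1²` and to
`A2 (τA2 - A2)` it keeps `Q0 > 0`, `A1 ∈ (-τA1, τA1)` and `A2 ∈ (0, τA2)`; applied along the
cascade `Q0 → Q1 → Q2 → Q3` it makes the three populations positive for `t > 0`.
Because `A1 > -τA1` and `τA1 < τA1C`, the growth bracket of `Q2, Q3` is nonnegative as soon as
`Q2 + Q3 ≤ τC (1 - τA1 / τA1C)`, so `Q2 + Q3` stays above some `δ > 0` after time `1`.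
Then `A2` is increasing and `(τA2 - A2)' ≤ -r (τA2 - A2)` with `r = min ᾱ2 ᾱ3 * δ * A2 0 / τA2`,
and Grönwall's inequality gives the exponential rate.
-/

open Set Filter Real Topology

theorem le_of_forall_pos_le_add_mul {a b c : ℝ} (h : ∀ ε > 0, a ≤ b + ε * c) : a ≤ b := by
  have hlim : Tendsto (fun ε => b + ε * c) (𝓝[>] 0) (𝓝 b) := by
    have : Continuous fun ε : ℝ => b + ε * c := by fun_prop
    simpa using (this.tendsto 0).mono_left nhdsWithin_le_nhds
  exact ge_of_tendsto hlim (eventually_nhdsWithin_of_forall h)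

theorem mul_exp_le_of_hasDerivAt_ge {x x' a : ℝ → ℝ} {s T H : ℝ}
    (hx : ∀ t ∈ Icc s T, HasDerivAt x (x' t) t) (hle : ∀ t ∈ Icc s T, a t * x t ≤ x' t)
    (ha : ∀ t ∈ Icc s T, |a t| ≤ H) (hxs : 0 ≤ x s) :
    ∀ t ∈ Icc s T, x s * exp (-H * (t - s)) ≤ x t := by
  intro t ht
  -- the `ε`-term of the fence makes the derivative comparison at contact points strict
  refine le_of_forall_pos_le_add_mul (c := exp ((H + 1) * (t - s))) fun ε hε => ?_
  have hB : ∀ u, HasDerivAt (fun u => -(x s * exp (-H * (u - s))) + ε * exp ((H + 1) * (u - s)))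
      (H * (x s * exp (-H * (u - s))) + (H + 1) * (ε * exp ((H + 1) * (u - s)))) u := by
    intro u
    have h1 := ((((hasDerivAt_id u).sub_const s).const_mul (-H)).exp).const_mul (x s)
    have h2 := ((((hasDerivAt_id u).sub_const s).const_mul (H + 1)).exp).const_mul ε
    exact (h1.neg.add h2).congr_deriv (by simp only [id]; ring)
  have hfence := image_le_of_deriv_right_lt_deriv_boundary (f := fun u => -x u)
    (f' := fun u => -x' u) (HasDerivAt.continuousOn fun u hu => (hx u hu).neg)
    (fun u hu => (hx u (Ico_subset_Icc_self hu)).neg.hasDerivWithinAt) (by simp [hε.le]) hB ?_ ht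
  · linarith
  · intro u hu hcontact
    have hu' := Ico_subset_Icc_self hu
    obtain ⟨haH, haH'⟩ := abs_le.1 (ha u hu')
    have hxu : x u = x s * exp (-H * (u - s)) - ε * exp ((H + 1) * (u - s)) := by
      linarith
    have hle' := hle u hu'
    rw [hxu] at hle'
    have hE1 := exp_pos (-H * (u - s))
    have hE2 := exp_pos ((H + 1) * (u - s))
    nlinarith [mul_nonneg (by linarith : 0 ≤ H + a u) (mul_nonneg hxs hE1.le),
      mul_nonneg (by linarith : 0 ≤ H - a u) (mul_pos hε hE2).le, mul_pos hε hE2]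

theorem min_le_of_hasDerivAt_nonneg_of_le {x x' : ℝ → ℝ} {s c : ℝ}
    (hx : ∀ t ∈ Ici s, HasDerivAt x (x' t) t) (hbar : ∀ t ∈ Ici s, x t ≤ c → 0 ≤ x' t) :
    ∀ t ∈ Ici s, min (x s) c ≤ x t := by
  intro t ht
  refine le_of_forall_pos_le_add_mul (c := t - s) fun ε hε => ?_
  have hB : ∀ u, HasDerivAt (fun u => -min (x s) c + ε * (u - s)) ε u := fun u => by
    simpa using (((hasDerivAt_id u).sub_const s).const_mul ε).const_add (-min (x s) c)
  have hfence := image_le_of_deriv_right_lt_deriv_boundary (f := fun u => -x u)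
    (f' := fun u => -x' u) (b := t) (HasDerivAt.continuousOn fun u hu => (hx u hu.1).neg)
    (fun u hu => (hx u hu.1).neg.hasDerivWithinAt) (by simp) hB ?_ ⟨ht, le_rfl⟩
  · linarith
  · intro u hu hcontact
    have hxu : x u ≤ c := by
      nlinarith [min_le_right (x s) c, mul_nonneg hε.le (sub_nonneg.2 hu.1)]
    linarith [hbar u hu.1 hxu]

theorem le_mul_exp_of_hasDerivAt_le {u u' : ℝ → ℝ} {s T K : ℝ}
    (hu : ∀ t ∈ Icc s T, HasDerivAt u (u' t) t) (hle : ∀ t ∈ Ico s T, u' t ≤ K * u t) :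
    ∀ t ∈ Icc s T, u t ≤ u s * exp (K * (t - s)) := by
  intro t ht
  simpa only [gronwallBound_ε0] using le_gronwallBound_of_liminf_deriv_right_le (K := K) (ε := 0)
    (HasDerivAt.continuousOn hu)
    (fun t ht _ hr => (hu t (Ico_subset_Icc_self ht)).hasDerivWithinAt.liminf_right_slope_le hr)
    le_rfl (fun t ht => by simpa using hle t ht) t ht

theorem exists_abs_le_of_continuousOn {a : ℝ → ℝ} (ha : ContinuousOn a (Ici 0)) (T : ℝ) :
    ∃ H, ∀ t ∈ Icc 0 T, |a t| ≤ H :=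
  isCompact_Icc.exists_bound_of_continuousOn (ha.mono Icc_subset_Ici_self)

theorem nonneg_of_hasDerivAt_ge_mul {x x' a : ℝ → ℝ}
    (hx : ∀ t ∈ Ici 0, HasDerivAt x (x' t) t) (hle : ∀ t ∈ Ici 0, a t * x t ≤ x' t)
    (ha : ∀ T, ∃ H, ∀ t ∈ Icc 0 T, |a t| ≤ H) (hx0 : 0 ≤ x 0) : ∀ t ∈ Ici 0, 0 ≤ x t := by
  intro t ht
  obtain ⟨H, hH⟩ := ha t
  have := mul_exp_le_of_hasDerivAt_ge (fun u hu => hx u hu.1) (fun u hu => hle u hu.1) hH hx0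
    t ⟨ht, le_rfl⟩
  exact (by positivity : 0 ≤ x 0 * exp (-H * (t - 0))).trans this

theorem pos_of_hasDerivAt_ge_mul {x x' a : ℝ → ℝ}
    (hx : ∀ t ∈ Ici 0, HasDerivAt x (x' t) t) (hle : ∀ t ∈ Ici 0, a t * x t ≤ x' t)
    (ha : ∀ T, ∃ H, ∀ t ∈ Icc 0 T, |a t| ≤ H) (hx0 : 0 < x 0) : ∀ t ∈ Ici 0, 0 < x t := by
  intro t ht
  obtain ⟨H, hH⟩ := ha t
  have := mul_exp_le_of_hasDerivAt_ge (fun u hu => hx u hu.1) (fun u hu => hle u hu.1) hH hx0.le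
    t ⟨ht, le_rfl⟩
  exact (by positivity : 0 < x 0 * exp (-H * (t - 0))).trans_le this

theorem pos_of_eventually_nonneg_of_hasDerivAt {x : ℝ → ℝ} {t d : ℝ}
    (hnn : ∀ᶠ s in 𝓝 t, 0 ≤ x s) (hd : HasDerivAt x d t) (hpos : x t = 0 → 0 < d) :
    0 < x t := by
  refine hnn.self_of_nhds.lt_of_ne fun h => ?_
  have hmin : IsLocalMin x t := by
    filter_upwards [hnn] with s hs
    rw [← h]
    exact hs
  exact (hpos h.symm).ne' (hmin.hasDerivAt_eq_zero hd)

theorem pos_of_hasDerivAt_mul_add {x a b : ℝ → ℝ}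
    (hx : ∀ t ∈ Ici 0, HasDerivAt x (a t * x t + b t) t)
    (ha : ∀ T, ∃ H, ∀ t ∈ Icc 0 T, |a t| ≤ H) (hb0 : 0 ≤ b 0) (hb : ∀ t ∈ Ioi 0, 0 < b t)
    (hx0 : 0 ≤ x 0) : ∀ t ∈ Ioi 0, 0 < x t := by
  have hnn : ∀ t ∈ Ici 0, 0 ≤ x t := by
    refine nonneg_of_hasDerivAt_ge_mul hx (fun t ht => ?_) ha hx0
    rcases (mem_Ici.1 ht).eq_or_lt with rfl | ht
    · linarith
    · linarith [hb t ht]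
  intro t ht
  refine pos_of_eventually_nonneg_of_hasDerivAt ?_ (hx t (Ioi_subset_Ici_self ht)) fun h => ?_
  · filter_upwards [Ioi_mem_nhds ht] with s hs using hnn s (Ioi_subset_Ici_self hs)
  · simpa [h] using hb t ht

theorem mem_Ioo_of_hasDerivAt_logistic {x g : ℝ → ℝ} {τ : ℝ} (hτ : 0 < τ)
    (hx : ∀ t ∈ Ici 0, HasDerivAt x (g t * x t * (1 - x t / τ)) t)
    (hg : ContinuousOn g (Ici 0)) (hx0 : x 0 ∈ Ioo 0 τ) : ∀ t ∈ Ici 0, x t ∈ Ioo 0 τ := by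
  have hxc := HasDerivAt.continuousOn hx
  have hpos : ∀ t ∈ Ici 0, 0 < x t * (τ - x t) := by
    refine pos_of_hasDerivAt_ge_mul (a := fun t => g t * (τ - 2 * x t) / τ)
      (fun t ht => (hx t ht).mul ((hx t ht).const_sub τ)) (fun t _ => le_of_eq ?_)
      (exists_abs_le_of_continuousOn (by fun_prop)) (by nlinarith [hx0.1, hx0.2])
    field_simp
    ring
  intro t ht
  have := hpos t ht
  constructor <;> nlinarith

theorem mem_Ioo_of_hasDerivAt_mul_one_add_mul_one_sub {x g : ℝ → ℝ} {τ : ℝ} (hτ : 0 < τ)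
    (hx : ∀ t ∈ Ici 0, HasDerivAt x (g t * (1 + x t / τ) * (1 - x t / τ)) t)
    (hg : ContinuousOn g (Ici 0)) (hx0 : x 0 ∈ Ioo (-τ) τ) : ∀ t ∈ Ici 0, x t ∈ Ioo (-τ) τ := by
  have hxc := HasDerivAt.continuousOn hx
  have hpos : ∀ t ∈ Ici 0, 0 < τ ^ 2 - x t ^ 2 := by
    refine pos_of_hasDerivAt_ge_mul (a := fun t => -(2 * x t * g t) / τ ^ 2)
      (fun t ht => ((hx t ht).pow 2).const_sub (τ ^ 2)) (fun t _ => le_of_eq ?_)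
      (exists_abs_le_of_continuousOn (by fun_prop)) (by nlinarith [hx0.1, hx0.2])
    field_simp
    ring
  intro t ht
  have := hpos t ht
  constructor <;> nlinarith

theorem pos_of_hasDerivAt_cascade {q1 q2 q3 k0 k1 k2 β : ℝ → ℝ} {γ2 γ3 M1 M2 : ℝ}
    (hβ : ContinuousOn β (Ici 0)) (hk0 : ∀ t ∈ Ici 0, 0 < k0 t)
    (hk1 : ∀ t, 0 < k1 t ∧ k1 t ≤ M1) (hk2 : ∀ t, 0 < k2 t ∧ k2 t ≤ M2)
    (h1 : ∀ t ∈ Ici 0, HasDerivAt q1 (k0 t - k1 t * q1 t) t)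
    (h2 : ∀ t ∈ Ici 0, HasDerivAt q2 (γ2 * q2 t * β t + k1 t * q1 t - k2 t * q2 t) t)
    (h3 : ∀ t ∈ Ici 0, HasDerivAt q3 (γ3 * q3 t * β t + k2 t * q2 t) t)
    (h10 : q1 0 = 0) (h20 : q2 0 = 0) (h30 : q3 0 = 0) :
    ∀ t ∈ Ioi 0, 0 < q1 t ∧ 0 < q2 t ∧ 0 < q3 t := by
  have hq1 : ∀ t ∈ Ioi 0, 0 < q1 t :=
    pos_of_hasDerivAt_mul_add (a := fun t => -k1 t) (b := k0)
      (fun t ht => (h1 t ht).congr_deriv (by ring))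
      (fun _ => ⟨M1, fun t _ => by rw [abs_neg, abs_of_pos (hk1 t).1]; exact (hk1 t).2⟩)
      (hk0 0 self_mem_Ici).le (fun t ht => hk0 t (Ioi_subset_Ici_self ht)) h10.ge
  have hq2 : ∀ t ∈ Ioi 0, 0 < q2 t := by
    refine pos_of_hasDerivAt_mul_add (a := fun t => γ2 * β t - k2 t) (b := fun t => k1 t * q1 t)
      (fun t ht => (h2 t ht).congr_deriv (by ring)) (fun T => ?_) (by simp [h10])
      (fun t ht => mul_pos (hk1 t).1 (hq1 t ht)) h20.ge
    obtain ⟨H, hH⟩ := exists_abs_le_of_continuousOn hβ T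
    refine ⟨|γ2| * H + M2, fun t ht => ?_⟩
    calc |γ2 * β t - k2 t| ≤ |γ2| * |β t| + |k2 t| := by rw [← abs_mul]; exact abs_sub _ _
      _ ≤ |γ2| * H + M2 := by
        gcongr
        · exact hH t ht
        · rw [abs_of_pos (hk2 t).1]; exact (hk2 t).2
  have hq3 : ∀ t ∈ Ioi 0, 0 < q3 t := by
    refine pos_of_hasDerivAt_mul_add (a := fun t => γ3 * β t) (b := fun t => k2 t * q2 t)
      (fun t ht => (h3 t ht).congr_deriv (by ring)) (exists_abs_le_of_continuousOn (by fun_prop))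
      (by simp [h20]) (fun t ht => mul_pos (hk2 t).1 (hq2 t ht)) h30.ge
  exact fun t ht => ⟨hq1 t ht, hq2 t ht, hq3 t ht⟩

theorem exists_abs_sub_le_exp_of_hasDerivAt_logistic {x g : ℝ → ℝ} {τ κ s : ℝ} (hτ : 0 < τ)
    (hκ : 0 < κ) (hs : 0 ≤ s) (hx : ∀ t ∈ Ici 0, HasDerivAt x (g t * x t * (1 - x t / τ)) t)
    (hxI : ∀ t ∈ Ici 0, x t ∈ Ioo 0 τ) (hg : ∀ t ∈ Ioi 0, 0 ≤ g t) (hgκ : ∀ t ∈ Ici s, κ ≤ g t) :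
    ∃ r > 0, ∀ t ∈ Ici s, |x t - τ| ≤ exp (r * s) * |x 0 - τ| * exp (-r * t) := by
  have hmono : MonotoneOn x (Ici 0) := by
    refine monotoneOn_of_hasDerivWithinAt_nonneg (f' := fun t => g t * x t * (1 - x t / τ))
      (convex_Ici 0) (HasDerivAt.continuousOn hx) (fun t ht => ?_) (fun t ht => ?_) <;>
      rw [interior_Ici] at ht
    · exact (hx t (Ioi_subset_Ici_self ht)).hasDerivWithinAt
    · obtain ⟨hx0, hxτ⟩ := hxI t (Ioi_subset_Ici_self ht)
      have : 0 ≤ 1 - x t / τ := by rw [sub_nonneg, div_le_one hτ]; exact hxτ.le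
      exact mul_nonneg (mul_nonneg (hg t ht) hx0.le) this
  obtain ⟨hx00, hx0τ⟩ := hxI 0 self_mem_Ici
  refine ⟨κ * x 0 / τ, by positivity, fun t ht => ?_⟩
  have hgap := le_mul_exp_of_hasDerivAt_le (u := fun t => τ - x t) (K := -(κ * x 0 / τ))
    (fun u hu => (hx u (hs.trans hu.1)).const_sub τ) (fun u hu => ?_) t ⟨ht, le_rfl⟩
  · have hxt := hxI t (hs.trans ht)
    have hxs : x 0 ≤ x s := hmono self_mem_Ici hs hs
    rw [abs_of_neg (by linarith [hxt.2]), abs_of_neg (by linarith)]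
    calc -(x t - τ) ≤ (τ - x s) * exp (-(κ * x 0 / τ) * (t - s)) := by linarith
      _ ≤ (τ - x 0) * exp (-(κ * x 0 / τ) * (t - s)) := by gcongr
      _ = exp (κ * x 0 / τ * s) * -(x 0 - τ) * exp (-(κ * x 0 / τ) * t) := by
        rw [mul_comm (exp _), mul_assoc, ← exp_add]; ring_nf
  · have hu0 : 0 ≤ u := hs.trans hu.1
    have hxu := hxI u hu0
    have hxu0 : x 0 ≤ x u := hmono self_mem_Ici hu0 hu0
    have : g u * x u * (1 - x u / τ) = g u * x u * (τ - x u) / τ := by field_simp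
    rw [this, neg_mul, neg_le_neg_iff, div_mul_eq_mul_div]
    have hgu := hgκ u hu.1
    gcongr
    · linarith [hxu.2]
    · linarith

theorem exists_pos_le_add_of_hasDerivAt_cascade {q1 q2 q3 k1 k2 β : ℝ → ℝ} {γ2 γ3 c s : ℝ}
    (hs : 0 < s) (hγ2 : 0 ≤ γ2) (hγ3 : 0 ≤ γ3) (hc : 0 < c)
    (h2 : ∀ t ∈ Ici 0, HasDerivAt q2 (γ2 * q2 t * β t + k1 t * q1 t - k2 t * q2 t) t)
    (h3 : ∀ t ∈ Ici 0, HasDerivAt q3 (γ3 * q3 t * β t + k2 t * q2 t) t)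
    (hq : ∀ t ∈ Ioi 0, 0 < q1 t ∧ 0 < q2 t ∧ 0 < q3 t) (hk1 : ∀ t, 0 ≤ k1 t)
    (hβ : ∀ t ∈ Ioi 0, q2 t + q3 t ≤ c → 0 ≤ β t) :
    ∃ δ > 0, ∀ t ∈ Ici s, δ ≤ q2 t + q3 t := by
  have hpos : Ici s ⊆ Ioi 0 := Ici_subset_Ioi.2 hs
  refine ⟨min (q2 s + q3 s) c, lt_min (by linarith [hq s hs]) hc, ?_⟩
  refine min_le_of_hasDerivAt_nonneg_of_le (fun t ht => (h2 t ?_).add (h3 t ?_))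
    (fun t ht hsum => ?_) <;> try exact Ioi_subset_Ici_self (hpos ht)
  obtain ⟨hq1, hq2, hq3⟩ := hq t (hpos ht)
  have hβt := hβ t (hpos ht) hsum
  nlinarith [mul_nonneg (mul_nonneg hγ2 hq2.le) hβt, mul_nonneg (mul_nonneg hγ3 hq3.le) hβt,
    mul_nonneg (hk1 t) hq1.le]

theorem growth_bracket_nonneg {S a1 a2 τC τA1 τA1C τA2C : ℝ} (hτC : 0 < τC) (hτA1C : 0 < τA1C)
    (hτA2C : 0 < τA2C) (ha1 : -τA1 < a1) (ha2 : 0 < a2) (hS : S ≤ τC * (1 - τA1 / τA1C)) :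
    0 ≤ 1 - S / τC + a1 / τA1C + a2 / τA2C := by
  have h1 : S / τC ≤ 1 - τA1 / τA1C := by rw [div_le_iff₀ hτC]; linarith
  have h2 : -τA1 / τA1C ≤ a1 / τA1C := by gcongr
  have h3 : 0 ≤ a2 / τA2C := by positivity
  rw [neg_div] at h2
  linarith

theorem stmt8_general
    (γ2 γ3 τC τA1 τA1C τA2 τA2C α1 α2 α3 αb2 αb3 : ℝ)
    (hγ2 : 0 < γ2) (hγ3 : 0 < γ3) (hτC : 0 < τC) (hτA1 : 0 < τA1)
    (hτA1C : 0 < τA1C) (hτA2 : 0 < τA2) (hτA2C : 0 < τA2C)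
    (hαb2 : 0 < αb2) (hαb3 : 0 < αb3)
    (f0 : ℝ → ℝ → ℝ) (f1 : ℝ → ℝ) (f2 : ℝ → ℝ → ℝ)
    (m0 M0 m1 M1 m2 M2 : ℝ) (hm0 : 0 < m0) (hm1 : 0 < m1) (hm2 : 0 < m2)
    (hf0bd : ∀ x y, m0 ≤ f0 x y ∧ f0 x y ≤ M0)
    (hf1bd : ∀ x, m1 ≤ f1 x ∧ f1 x ≤ M1)
    (hf2bd : ∀ x y, m2 ≤ f2 x y ∧ f2 x y ≤ M2)
    (Q0 Q1 Q2 Q3 A1 A2 : ℝ → ℝ)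
    (hQ0' : ∀ t ∈ Set.Ici (0:ℝ), HasDerivAt Q0 (-(f0 (Q2 t) (Q3 t)) * Q0 t) t)
    (hQ1' : ∀ t ∈ Set.Ici (0:ℝ), HasDerivAt Q1 (f0 (Q2 t) (Q3 t) * Q0 t - f1 (A1 t) * Q1 t) t)
    (hQ2' : ∀ t ∈ Set.Ici (0:ℝ), HasDerivAt Q2
      (γ2 * Q2 t * (1 - (Q2 t + Q3 t) / τC + A1 t / τA1C + A2 t / τA2C)
        + f1 (A1 t) * Q1 t - f2 (A1 t) (A2 t) * Q2 t) t)
    (hQ3' : ∀ t ∈ Set.Ici (0:ℝ), HasDerivAt Q3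
      (γ3 * Q3 t * (1 - (Q2 t + Q3 t) / τC + A1 t / τA1C + A2 t / τA2C)
        + f2 (A1 t) (A2 t) * Q2 t) t)
    (hA1' : ∀ t ∈ Set.Ici (0:ℝ), HasDerivAt A1
      ((α1 * Q1 t + α2 * Q2 t - α3 * Q3 t) * (1 + A1 t / τA1) * (1 - A1 t / τA1)) t)
    (hA2' : ∀ t ∈ Set.Ici (0:ℝ), HasDerivAt A2
      ((αb2 * Q2 t + αb3 * Q3 t) * A2 t * (1 - A2 t / τA2)) t)
    (hQ0i : 0 < Q0 0) (hQ1i : Q1 0 = 0) (hQ2i : Q2 0 = 0) (hQ3i : Q3 0 = 0)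
    (hA1i : A1 0 ∈ Set.Ioo (-τA1) τA1) (hA2i : A2 0 ∈ Set.Ioo 0 τA2)
    (hττ : τA1 < τA1C) :
    ∃ tstar > (0:ℝ), ∃ C > (0:ℝ), ∃ r > (0:ℝ),
      ∀ t > tstar, |A2 t - τA2| ≤ C * |A2 0 - τA2| * Real.exp (-r * t) := by
  have hQ1c := HasDerivAt.continuousOn hQ1'
  have hQ2c := HasDerivAt.continuousOn hQ2'
  have hQ3c := HasDerivAt.continuousOn hQ3'
  have hA1c := HasDerivAt.continuousOn hA1'
  have hA2c := HasDerivAt.continuousOn hA2'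
  have hf0 x y : 0 < f0 x y := hm0.trans_le (hf0bd x y).1
  have hQ0 : ∀ t ∈ Ici (0:ℝ), 0 < Q0 t :=
    pos_of_hasDerivAt_ge_mul hQ0' (fun t _ => le_rfl)
      (fun _ => ⟨M0, fun t _ => by rw [abs_neg, abs_of_pos (hf0 _ _)]; exact (hf0bd _ _).2⟩) hQ0i
  have hA1 := mem_Ioo_of_hasDerivAt_mul_one_add_mul_one_sub hτA1 hA1' (by fun_prop) hA1i
  have hA2 := mem_Ioo_of_hasDerivAt_logistic hτA2 hA2' (by fun_prop) hA2i
  have hQ := pos_of_hasDerivAt_cascade (k0 := fun t => f0 (Q2 t) (Q3 t) * Q0 t)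
    (β := fun t => 1 - (Q2 t + Q3 t) / τC + A1 t / τA1C + A2 t / τA2C)
    (by fun_prop)
    (fun t ht => mul_pos (hf0 _ _) (hQ0 t ht))
    (fun _ => ⟨hm1.trans_le (hf1bd _).1, (hf1bd _).2⟩)
    (fun _ => ⟨hm2.trans_le (hf2bd _ _).1, (hf2bd _ _).2⟩) hQ1' hQ2' hQ3' hQ1i hQ2i hQ3i
  obtain ⟨δ, hδ, hS⟩ := exists_pos_le_add_of_hasDerivAt_cascade (s := 1)
    (c := τC * (1 - τA1 / τA1C)) one_pos hγ2.le hγ3.le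
    (mul_pos hτC (sub_pos.2 ((div_lt_one hτA1C).2 hττ))) hQ2' hQ3' hQ
    (fun _ => hm1.le.trans (hf1bd _).1) fun t ht hsum =>
      growth_bracket_nonneg hτC hτA1C hτA2C (hA1 t (Ioi_subset_Ici_self ht)).1
        (hA2 t (Ioi_subset_Ici_self ht)).1 hsum
  obtain ⟨r, hr, hconv⟩ := exists_abs_sub_le_exp_of_hasDerivAt_logistic (s := 1)
    (κ := min αb2 αb3 * δ) hτA2 (by positivity) zero_le_one hA2' hA2
    (fun t ht => by obtain ⟨-, hq2, hq3⟩ := hQ t ht; positivity) fun t ht => by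
      obtain ⟨-, hq2, hq3⟩ := hQ t (mem_Ioi.2 (one_pos.trans_le ht))
      nlinarith [hS t ht, min_le_left αb2 αb3, min_le_right αb2 αb3, lt_min hαb2 hαb3]
  exact ⟨1, one_pos, exp (r * 1), exp_pos _, r, hr, fun t ht => hconv t ht.le⟩

theorem stmt8
    (γ2 γ3 τC τA1 τA1C τA2 τA2C α1 α2 α3 αb2 αb3 : ℝ)
    (hγ2 : 0 < γ2) (hγ3 : 0 < γ3) (hτC : 0 < τC) (hτA1 : 0 < τA1)
    (hτA1C : 0 < τA1C) (hτA2 : 0 < τA2) (hτA2C : 0 < τA2C)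
    (hα1 : 0 < α1) (hα2 : 0 < α2) (hα3 : 0 < α3) (hαb2 : 0 < αb2) (hαb3 : 0 < αb3)
    (f0 : ℝ → ℝ → ℝ) (f1 : ℝ → ℝ) (f2 : ℝ → ℝ → ℝ)
    (K0 K1 K2 : NNReal)
    (hf0lip : LipschitzWith K0 (fun p : ℝ × ℝ => f0 p.1 p.2))
    (hf1lip : LipschitzWith K1 f1)
    (hf2lip : LipschitzWith K2 (fun p : ℝ × ℝ => f2 p.1 p.2))
    (m0 M0 m1 M1 m2 M2 : ℝ) (hm0 : 0 < m0) (hm1 : 0 < m1) (hm2 : 0 < m2)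
    (hf0bd : ∀ x y, m0 ≤ f0 x y ∧ f0 x y ≤ M0)
    (hf1bd : ∀ x, m1 ≤ f1 x ∧ f1 x ≤ M1)
    (hf2bd : ∀ x y, m2 ≤ f2 x y ∧ f2 x y ≤ M2)
    (Q0 Q1 Q2 Q3 A1 A2 : ℝ → ℝ)
    (hQ0' : ∀ t ∈ Set.Ici (0:ℝ), HasDerivAt Q0 (-(f0 (Q2 t) (Q3 t)) * Q0 t) t)
    (hQ1' : ∀ t ∈ Set.Ici (0:ℝ), HasDerivAt Q1 (f0 (Q2 t) (Q3 t) * Q0 t - f1 (A1 t) * Q1 t) t)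
    (hQ2' : ∀ t ∈ Set.Ici (0:ℝ), HasDerivAt Q2
      (γ2 * Q2 t * (1 - (Q2 t + Q3 t) / τC + A1 t / τA1C + A2 t / τA2C)
        + f1 (A1 t) * Q1 t - f2 (A1 t) (A2 t) * Q2 t) t)
    (hQ3' : ∀ t ∈ Set.Ici (0:ℝ), HasDerivAt Q3
      (γ3 * Q3 t * (1 - (Q2 t + Q3 t) / τC + A1 t / τA1C + A2 t / τA2C)
        + f2 (A1 t) (A2 t) * Q2 t) t)
    (hA1' : ∀ t ∈ Set.Ici (0:ℝ), HasDerivAt A1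
      ((α1 * Q1 t + α2 * Q2 t - α3 * Q3 t) * (1 + A1 t / τA1) * (1 - A1 t / τA1)) t)
    (hA2' : ∀ t ∈ Set.Ici (0:ℝ), HasDerivAt A2
      ((αb2 * Q2 t + αb3 * Q3 t) * A2 t * (1 - A2 t / τA2)) t)
    (hQ0i : 0 < Q0 0) (hQ1i : Q1 0 = 0) (hQ2i : Q2 0 = 0) (hQ3i : Q3 0 = 0)
    (hA1i : A1 0 ∈ Set.Ioo (-τA1) τA1) (hA2i : A2 0 ∈ Set.Ioo 0 τA2)
    (hττ : τA1 < τA1C) :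
    ∃ tstar > (0:ℝ), ∃ C > (0:ℝ), ∃ r > (0:ℝ),
      ∀ t > tstar, |A2 t - τA2| ≤ C * |A2 0 - τA2| * Real.exp (-r * t) :=
  stmt8_general γ2 γ3 τC τA1 τA1C τA2 τA2C α1 α2 α3 αb2 αb3 hγ2 hγ3 hτC hτA1 hτA1C hτA2 hτA2C hαb2
    hαb3 f0 f1 f2 m0 M0 m1 M1 m2 M2 hm0 hm1 hm2 hf0bd hf1bd hf2bd Q0 Q1 Q2 Q3 A1 A2 hQ0' hQ1' hQ2'
    hQ3' hA1' hA2' hQ0i hQ1i hQ2i hQ3i hA1i hA2i hττ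
end

section
/- Assume γ2 < γ3 and τ_{A1} < τ_{A1}^C, and write C(x) = 1 + x/τ_{A1}^C + τ_{A2}/τ_{A2}^C. Let (Q2^∞, Q3^∞, A1^∞) with Q2^∞ ≥ 0, Q3^∞ ≥ 0 and A1^∞ ∈ [-τ_{A1}, τ_{A1}] be a steady state of the reduced system (R), i.e. a point at which the right-hand side of (R) vanishes. Then Q2^∞ = 0, and exactly one of the following holds: (i) Q3^∞ = 0 and A1^∞ is an arbitrary value in [-τ_{A1}, τ_{A1}]; (ii) Q3^∞ = τ_C · C(τ_{A1}) and A1^∞ = τ_{A1}; (iii) Q3^∞ = τ_C · C(-τ_{A1}) and A1^∞ = -τ_{A1}. -/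
theorem stmt9
    (γ2 γ3 τC τA1 τA1C τA2 τA2C α2 α3 : ℝ)
    (hγ2 : 0 < γ2) (hγ3 : 0 < γ3) (hτC : 0 < τC) (hτA1 : 0 < τA1)
    (hτA1C : 0 < τA1C) (hτA2 : 0 < τA2) (hτA2C : 0 < τA2C)
    (hα2 : 0 < α2) (hα3 : 0 < α3)
    (f2 : ℝ → ℝ → ℝ) (K2 : NNReal)
    (hf2lip : LipschitzWith K2 (fun p : ℝ × ℝ => f2 p.1 p.2))
    (m2 M2 : ℝ) (hm2 : 0 < m2)
    (hf2bd : ∀ x y, m2 ≤ f2 x y ∧ f2 x y ≤ M2)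
    (hγ : γ2 < γ3) (hττ : τA1 < τA1C)
    (q2 q3 a1 : ℝ) (hq2 : 0 ≤ q2) (hq3 : 0 ≤ q3) (ha1 : a1 ∈ Set.Icc (-τA1) τA1)
    (hs1 : γ2 * q2 * (1 - (q2 + q3) / τC + a1 / τA1C + τA2 / τA2C) - f2 a1 τA2 * q2 = 0)
    (hs2 : γ3 * q3 * (1 - (q2 + q3) / τC + a1 / τA1C + τA2 / τA2C) + f2 a1 τA2 * q2 = 0)
    (hs3 : (α2 * q2 - α3 * q3) * (1 + a1 / τA1) * (1 - a1 / τA1) = 0) :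
    q2 = 0 ∧
      ((q3 = 0 ∧
          ¬(q3 = τC * (1 + τA1 / τA1C + τA2 / τA2C) ∧ a1 = τA1) ∧
          ¬(q3 = τC * (1 + -τA1 / τA1C + τA2 / τA2C) ∧ a1 = -τA1)) ∨
       (¬(q3 = 0) ∧
          (q3 = τC * (1 + τA1 / τA1C + τA2 / τA2C) ∧ a1 = τA1) ∧
          ¬(q3 = τC * (1 + -τA1 / τA1C + τA2 / τA2C) ∧ a1 = -τA1)) ∨
       (¬(q3 = 0) ∧
          ¬(q3 = τC * (1 + τA1 / τA1C + τA2 / τA2C) ∧ a1 = τA1) ∧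
          (q3 = τC * (1 + -τA1 / τA1C + τA2 / τA2C) ∧ a1 = -τA1))) := by

  obtain ⟨ha1l, ha1r⟩ := ha1
  have hf := (hf2bd a1 τA2).1
  have hfpos : 0 < f2 a1 τA2 := lt_of_lt_of_le hm2 hf
  set C : ℝ := 1 - (q2 + q3) / τC + a1 / τA1C + τA2 / τA2C with hC
  -- q2 = 0
  have hq2z : q2 = 0 := by
    by_contra h
    have hq2p : 0 < q2 := lt_of_le_of_ne hq2 (Ne.symm h)
    have hCpos : 0 < C := by
      have h1 : γ2 * q2 * C = f2 a1 τA2 * q2 := by linarith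
      nlinarith [mul_pos hfpos hq2p, mul_pos hγ2 hq2p]
    nlinarith [mul_pos hfpos hq2p, mul_nonneg (mul_nonneg hγ3.le hq3) hCpos.le]
  subst hq2z
  refine ⟨rfl, ?_⟩
  have hdiv : τA1 / τA1C < 1 := (div_lt_one hτA1C).2 hττ
  have hdp : 0 < τA1 / τA1C := div_pos hτA1 hτA1C
  have hdp2 : 0 < τA2 / τA2C := div_pos hτA2 hτA2C
  have hpos1 : 0 < τC * (1 + τA1 / τA1C + τA2 / τA2C) := by
    apply mul_pos hτC; linarith
  have hpos2 : 0 < τC * (1 + -τA1 / τA1C + τA2 / τA2C) := by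
    apply mul_pos hτC
    have : -τA1 / τA1C = -(τA1 / τA1C) := by ring
    rw [this]; linarith
  by_cases hq3z : q3 = 0
  · left
    refine ⟨hq3z, ?_, ?_⟩
    · rintro ⟨h1, -⟩; rw [hq3z] at h1; linarith
    · rintro ⟨h1, -⟩; rw [hq3z] at h1; linarith
  · have hq3p : 0 < q3 := lt_of_le_of_ne hq3 (Ne.symm hq3z)
    have hCz : C = 0 := by
      have h2 : γ3 * q3 * C = 0 := by linarith
      have := mul_eq_zero.1 h2
      rcases this with h | h
      · rcases mul_eq_zero.1 h with h' | h'
        · exact absurd h' (ne_of_gt hγ3)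
        · exact absurd h' (ne_of_gt hq3p)
      · exact h
    have hq3eq : q3 = τC * (1 + a1 / τA1C + τA2 / τA2C) := by
      rw [hC] at hCz
      field_simp at hCz ⊢
      linarith
    have ha1pm : a1 = τA1 ∨ a1 = -τA1 := by
      have h3 : (1 + a1 / τA1) * (1 - a1 / τA1) = 0 := by
        rcases mul_eq_zero.1 hs3 with h | h
        · rcases mul_eq_zero.1 h with h' | h'
          · exfalso
            have : α2 * 0 - α3 * q3 < 0 := by
              have := mul_pos hα3 hq3p; linarith
            rw [h'] at this; exact lt_irrefl 0 this
          · rw [h']; ring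
        · rw [h]; ring
      rcases mul_eq_zero.1 h3 with h | h
      · right
        have : a1 / τA1 = -1 := by linarith
        field_simp at this; linarith
      · left
        have : a1 / τA1 = 1 := by linarith
        field_simp at this; linarith
    rcases ha1pm with h | h
    · right; left
      refine ⟨hq3z, ⟨by rw [hq3eq, h], h⟩, ?_⟩
      rintro ⟨-, h2⟩
      rw [h] at h2; linarith
    · right; right
      refine ⟨hq3z, ?_, ⟨by rw [hq3eq, h], h⟩⟩
      rintro ⟨-, h2⟩
      rw [h] at h2; linarith
end

section
/- Assume τ_{A1} < τ_{A1}^C and write C(x) = 1 + x/τ_{A1}^C + τ_{A2}/τ_{A2}^C, Q3^∞ = τ_C · C(-τ_{A1}), A1^∞ = -τ_{A1}, and f2^∞ = f2(-τ_{A1}, τ_{A2}) with f2^∞ > 0. Then the 3×3 matrix J with rows (γ2(C(A1^∞) - Q3^∞/τ_C) - f2^∞, 0, 0), (-γ3 Q3^∞/τ_C + f2^∞, γ3(C(A1^∞) - 2Q3^∞/τ_C), γ3 Q3^∞/τ_{A1}^C) and (α2(1 - (A1^∞/τ_{A1})²), -α3(1 - (A1^∞/τ_{A1})²), 2 α3 Q3^∞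 A1^∞/τ_{A1}²) has exactly the eigenvalues λ1 = -f2^∞, λ2 = -γ3 C(-τ_{A1}) and λ3 = -2 α3 τ_C C(-τ_{A1})/τ_{A1}, all of which are negative real numbers; in particular, the steady state (0, τ_C C(-τ_{A1}), -τ_{A1}) of the reduced system is linearly stable. -/
/-!
At the steady state `Q3^∞ / τ_C = C(A1^∞)` and `(A1^∞ / τ_{A1})² = 1`, so the `γ2`-term of `J₁₁`
and the entries `J₃₁`, `J₃₂` vanish. In the coordinate order `(Q2, A1, Q3)` the matrix is then lower
triangular, hence its eigenvalues are its diagonal entries; they are negative because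
`C(-τ_{A1}) > 0`, which is what `τ_{A1} < τ_{A1}^C` guarantees.
-/

theorem Matrix.spectrum_fin_three_of_entries_eq_zero {K : Type*} [Field K] (a b c d e g : K) :
    spectrum K !![a, 0, 0; b, c, d; e, 0, g] = {a, c, g} := by
  ext x
  rw [spectrum.mem_iff, Matrix.isUnit_iff_isUnit_det, isUnit_iff_ne_zero, not_not,
    Matrix.det_fin_three]
  simp [Matrix.algebraMap_matrix_apply, sub_eq_zero, or_assoc]

theorem stmt10_general
    (γ2 γ3 τC τA1 τA1C τA2 τA2C α2 α3 : ℝ)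
    (hγ3 : 0 < γ3) (hτC : 0 < τC) (hτA1 : 0 < τA1)
    (hτA1C : 0 < τA1C) (hτA2 : 0 < τA2) (hτA2C : 0 < τA2C)
    (hα3 : 0 < α3)
    (hττ : τA1 < τA1C)
    (f2 : ℝ → ℝ → ℝ) (hf2pos : ∀ x y, 0 < f2 x y)
    (Cinf Q3inf A1inf f2inf : ℝ)
    (hCinf : Cinf = 1 + -τA1 / τA1C + τA2 / τA2C)
    (hQ3inf : Q3inf = τC * Cinf) (hA1inf : A1inf = -τA1)
    (hf2inf : f2inf = f2 (-τA1) τA2) :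
    spectrum ℝ
      (!![γ2 * (Cinf - Q3inf / τC) - f2inf, 0, 0;
          -γ3 * Q3inf / τC + f2inf, γ3 * (Cinf - 2 * Q3inf / τC), γ3 * Q3inf / τA1C;
          α2 * (1 - (A1inf / τA1) ^ 2), -α3 * (1 - (A1inf / τA1) ^ 2),
            2 * α3 * Q3inf * A1inf / τA1 ^ 2] : Matrix (Fin 3) (Fin 3) ℝ)
      = {-f2inf, -(γ3 * Cinf), -(2 * α3 * τC * Cinf / τA1)} ∧
    -f2inf < 0 ∧ -(γ3 * Cinf) < 0 ∧ -(2 * α3 * τC * Cinf / τA1) < 0 := by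
  have hCpos : 0 < Cinf := by
    have : τA1 / τA1C < 1 := (div_lt_one hτA1C).2 hττ
    rw [hCinf, neg_div]
    linarith [div_pos hτA2 hτA2C]
  have hQ3 : Q3inf / τC = Cinf := by rw [hQ3inf]; field_simp
  have hA1 : (A1inf / τA1) ^ 2 = 1 := by rw [hA1inf, neg_div, div_self hτA1.ne', neg_one_sq]
  have hQ3C : γ3 * (Cinf - 2 * Q3inf / τC) = -(γ3 * Cinf) := by
    rw [mul_div_assoc, hQ3]; ring
  have hA1Q3 : 2 * α3 * Q3inf * A1inf / τA1 ^ 2 = -(2 * α3 * τC * Cinf / τA1) := by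
    rw [hQ3inf, hA1inf]; field_simp
  rw [hQ3, hQ3C, hA1, hA1Q3, sub_self, sub_self, mul_zero, mul_zero, mul_zero, zero_sub,
    Matrix.spectrum_fin_three_of_entries_eq_zero]
  exact ⟨rfl, neg_neg_of_pos (hf2inf ▸ hf2pos _ _), neg_neg_of_pos (mul_pos hγ3 hCpos),
    neg_neg_of_pos (by positivity)⟩

theorem stmt10
    (γ2 γ3 τC τA1 τA1C τA2 τA2C α2 α3 : ℝ)
    (hγ2 : 0 < γ2) (hγ3 : 0 < γ3) (hτC : 0 < τC) (hτA1 : 0 < τA1)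
    (hτA1C : 0 < τA1C) (hτA2 : 0 < τA2) (hτA2C : 0 < τA2C)
    (hα2 : 0 < α2) (hα3 : 0 < α3)
    (hττ : τA1 < τA1C)
    (f2 : ℝ → ℝ → ℝ) (hf2pos : ∀ x y, 0 < f2 x y)
    (Cinf Q3inf A1inf f2inf : ℝ)
    (hCinf : Cinf = 1 + -τA1 / τA1C + τA2 / τA2C)
    (hQ3inf : Q3inf = τC * Cinf) (hA1inf : A1inf = -τA1)
    (hf2inf : f2inf = f2 (-τA1) τA2) :
    spectrum ℝ
      (!![γ2 * (Cinf - Q3inf / τC) - f2inf, 0, 0;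
          -γ3 * Q3inf / τC + f2inf, γ3 * (Cinf - 2 * Q3inf / τC), γ3 * Q3inf / τA1C;
          α2 * (1 - (A1inf / τA1) ^ 2), -α3 * (1 - (A1inf / τA1) ^ 2),
            2 * α3 * Q3inf * A1inf / τA1 ^ 2] : Matrix (Fin 3) (Fin 3) ℝ)
      = {-f2inf, -(γ3 * Cinf), -(2 * α3 * τC * Cinf / τA1)} ∧
    -f2inf < 0 ∧ -(γ3 * Cinf) < 0 ∧ -(2 * α3 * τC * Cinf / τA1) < 0 :=
  stmt10_general γ2 γ3 τC τA1 τA1C τA2 τA2C α2 α3 hγ3 hτC hτA1 hτA1C hτA2 hτA2C hα3 hττ f2 hf2pos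
    Cinf Q3inf A1inf f2inf hCinf hQ3inf hA1inf hf2inf
end
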